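/- arXiv:2007.03798 — 8 statements merged into one kernel-verified Lean document; each statement's English description precedes it below -/
import Mathlib

section
/- Let H be a real Hilbert space and let f, g ∈ Γ0(H). If prox_f(x) = prox_g(x) for all x ∈ H, then f and g differ by a constant, i.e., there exists c ∈ ℝ such that f(x) = g(x) + c for all x ∈ H. -/
/-!
The proximal point `p = P x` is characterised by `x - p ∈ ∂f(p)`, and likewise for `g`; since
`∂f` is monotone, `P` is nonexpansive. Adding the proximal inequalities of `f` at `y` and of `g`
at `x` shows that `φ = f ∘ P - g ∘ P` satisfies `φ y - φ x ≤ ⟪y - x, P y - P x⟫ ≤ ‖y - x‖²`,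
so `φ` has zero derivative and is a constant `c`.

To leave the range of `P`, take `y` with `g y < ⊤` and points `p` with `λ (y - p) ∈ ∂g(p)`.
They exist for `λ = (3/2)ⁿ`, each one the fixed point of a contraction built from the previous
one, starting from `P`. They lie in the range of `P`, satisfy `g p ≤ g y` and tend to `y`, so
lower semicontinuity of `f` gives `f y ≤ g y + c`; by symmetry `g ≤ f - c`.
-/

open scoped InnerProductSpace
noncomputable section

variable {H : Type*} [NormedAddCommGroup H] [InnerProductSpace ℝ H] [CompleteSpace H]

/-- Convexity for extended-real-valued functions on a real Hilbert space. -/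
def ERealConvexOn (f : H → EReal) : Prop :=
  ∀ x y : H, ∀ a b : ℝ, 0 ≤ a → 0 ≤ b → a + b = 1 →
    f (a • x + b • y) ≤ (a : EReal) * f x + (b : EReal) * f y

/-- `f ∈ Γ₀(H)`: proper (never `⊥`, not identically `⊤`), convex and lower semicontinuous. -/
def Gamma0 (f : H → EReal) : Prop :=
  (∃ x, f x ≠ ⊤) ∧ (∀ x, f x ≠ ⊥) ∧ ERealConvexOn f ∧ LowerSemicontinuous f

/-- `p` is the proximal point of `f` at `x`, i.e. `p` minimizes `y ↦ f y + (1/2)‖x - y‖²`. -/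
def IsProx (f : H → EReal) (x p : H) : Prop :=
  ∀ y : H, f p + (((1:ℝ)/2 * ‖x - p‖ ^ 2 : ℝ) : EReal)
    ≤ f y + (((1:ℝ)/2 * ‖x - y‖ ^ 2 : ℝ) : EReal)

/-- The Fenchel (Legendre-Fenchel) conjugate of `f`. -/
def fenchel (f : H → EReal) (p : H) : EReal :=
  ⨆ v : H, ((⟪p, v⟫_ℝ : ℝ) : EReal) - f v

open Filter Topology

lemma eq_of_forall_sub_le_norm_sub_sq {F : Type*} [NormedAddCommGroup F] [NormedSpace ℝ F]
    {φ : F → ℝ} (h : ∀ x y, φ y - φ x ≤ ‖y - x‖ ^ 2) (x y : F) : φ x = φ y := by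
  have hderiv : ∀ z, HasFDerivAt φ (0 : F →L[ℝ] ℝ) z := by
    intro z
    rw [hasFDerivAt_iff_isLittleO_nhds_zero]
    refine (Asymptotics.isBigO_of_le _ fun v => ?_).trans_isLittleO
      (Asymptotics.isLittleO_norm_pow_id one_lt_two)
    have h₁ := h z (z + v)
    have h₂ := h (z + v) z
    rw [add_sub_cancel_left] at h₁
    rw [sub_add_cancel_left, norm_neg] at h₂
    rw [zero_apply, sub_zero, Real.norm_eq_abs,
      Real.norm_eq_abs, abs_of_nonneg (sq_nonneg ‖v‖), abs_le]
    constructor <;> linarith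
  exact is_const_of_fderiv_eq_zero (fun z => (hderiv z).differentiableAt)
    (fun z => (hderiv z).fderiv) x y

section NormedAddCommGroup

variable {E : Type*} [NormedAddCommGroup E] {f : E → EReal} {x p : E}

lemma IsProx.le_of_le {z : E} {r s : ℝ} (hp : IsProx f x p) (hr : f p = r) (hz : f z ≤ s) :
    r + 1 / 2 * ‖x - p‖ ^ 2 ≤ s + 1 / 2 * ‖x - z‖ ^ 2 := by
  have h := (hp z).trans (add_le_add_left hz _)
  rw [hr] at h
  exact_mod_cast h

lemma IsProx.exists_eq_coe (hbot : ∀ z, f z ≠ ⊥) (htop : ∃ z, f z ≠ ⊤) (hp : IsProx f x p) :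
    ∃ r : ℝ, f p = r := by
  obtain ⟨z, hz⟩ := htop
  have hp_top : f p ≠ ⊤ := by
    intro h
    have := hp z
    rw [h, EReal.top_add_coe, top_le_iff] at this
    exact EReal.add_ne_top hz (EReal.coe_ne_top _) this
  exact ⟨(f p).toReal, (EReal.coe_toReal hp_top (hbot p)).symm⟩

end NormedAddCommGroup

section InnerProductSpace

variable {E : Type*} [NormedAddCommGroup E] [InnerProductSpace ℝ E]

def IsSubgradient (f : E → EReal) (p u : E) : Prop :=
  ∃ r : ℝ, f p = r ∧ ∀ z, ((r + ⟪u, z - p⟫_ℝ : ℝ) : EReal) ≤ f z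

namespace IsSubgradient

variable {f : E → EReal} {p q u v x y : E}

lemma ne_bot (h : IsSubgradient f p u) (z : E) : f z ≠ ⊥ := by
  obtain ⟨r, -, hr⟩ := h
  exact ne_bot_of_le_ne_bot (EReal.coe_ne_bot _) (hr z)

lemma coe_toReal (h : IsSubgradient f p u) : ((f p).toReal : EReal) = f p := by
  obtain ⟨r, hr, -⟩ := h
  rw [hr, EReal.toReal_coe]

lemma inner_sub_nonneg (hu : IsSubgradient f p u) (hv : IsSubgradient f q v) :
    0 ≤ ⟪u - v, p - q⟫_ℝ := by
  obtain ⟨r, hr, hu⟩ := hu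
  obtain ⟨s, hs, hv⟩ := hv
  have h₁ : r + ⟪u, q - p⟫_ℝ ≤ s := by exact_mod_cast hs ▸ hu q
  have h₂ : s + ⟪v, p - q⟫_ℝ ≤ r := by exact_mod_cast hr ▸ hv p
  have : ⟪u - v, p - q⟫_ℝ = -⟪u, q - p⟫_ℝ - ⟪v, p - q⟫_ℝ := by
    rw [inner_sub_left, ← neg_sub q p, inner_neg_right]
  linarith

lemma le_of_smul_sub {a : ℝ} (h : IsSubgradient f p (a • (y - p))) (ha : 0 ≤ a) :
    f p ≤ f y := by
  obtain ⟨r, hr, h⟩ := h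
  have hy := h y
  rw [real_inner_smul_left, real_inner_self_eq_norm_sq] at hy
  exact hr ▸ le_trans (by exact_mod_cast (by nlinarith : r ≤ r + a * ‖y - p‖ ^ 2)) hy

lemma norm_sub_le {c : ℝ} (hp : IsSubgradient f p (c • (x - p)))
    (hq : IsSubgradient f q (c • (y - q))) (hc : 0 < c) : ‖p - q‖ ≤ ‖x - y‖ := by
  have hmono := hp.inner_sub_nonneg hq
  rw [← smul_sub, real_inner_smul_left,
    show x - p - (y - q) = (x - y) - (p - q) by abel, inner_sub_left,
    real_inner_self_eq_norm_sq] at hmono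
  have hsq : ‖p - q‖ ^ 2 ≤ ‖x - y‖ * ‖p - q‖ := by
    linarith [(mul_nonneg_iff_of_pos_left hc).mp hmono, real_inner_le_norm (x - y) (p - q)]
  nlinarith [norm_nonneg (p - q), norm_nonneg (x - y)]

lemma eq_of_sub (hp : IsSubgradient f p (x - p)) (hq : IsSubgradient f q (x - q)) : p = q := by
  rw [← one_smul ℝ (x - p)] at hp
  rw [← one_smul ℝ (x - q)] at hq
  simpa [sub_eq_zero] using hp.norm_sub_le hq one_pos

/-- `g (p n) + λₙ ‖y - p n‖² ≤ g y` together with the affine minorant of `g` given by `u₀` yields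
`λₙ ‖y - p n‖² ≤ C + ‖u₀‖ ‖y - p n‖` for a constant `C`. -/
lemma tendsto_of_smul_sub {g : E → EReal} {p₀ u₀ : E} {t : ℝ} {lam : ℕ → ℝ} {p : ℕ → E}
    (h₀ : IsSubgradient g p₀ u₀) (hy : g y = t) (hlam : Tendsto lam atTop atTop)
    (hp : ∀ n, IsSubgradient g (p n) (lam n • (y - p n))) : Tendsto p atTop (𝓝 y) := by
  obtain ⟨β, -, hβ⟩ := h₀
  set C := t - β - ⟪u₀, y - p₀⟫_ℝ
  have hbound : ∀ n, 1 ≤ lam n → ‖p n - y‖ ^ 2 ≤ (2 * |C| + ‖u₀‖ ^ 2) / lam n := by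
    intro n hn
    obtain ⟨r, hr, hsub⟩ := hp n
    have h₁ : β + ⟪u₀, p n - p₀⟫_ℝ ≤ r := by exact_mod_cast hr ▸ hβ (p n)
    have h₂ : r + lam n * ‖y - p n‖ ^ 2 ≤ t := by
      have := hsub y
      rw [hy, real_inner_smul_left, real_inner_self_eq_norm_sq] at this
      exact_mod_cast this
    have h₃ : ⟪u₀, p n - p₀⟫_ℝ = ⟪u₀, y - p₀⟫_ℝ - ⟪u₀, y - p n⟫_ℝ := by
      rw [← inner_sub_right, sub_sub_sub_cancel_left]
    have h₄ := real_inner_le_norm u₀ (y - p n)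
    rw [norm_sub_rev, le_div_iff₀ (by linarith)]
    nlinarith [le_abs_self C, sq_nonneg (‖y - p n‖ - ‖u₀‖),
      mul_nonneg (sub_nonneg.mpr hn) (sq_nonneg ‖y - p n‖)]
  have hsq : Tendsto (fun n => ‖p n - y‖ ^ 2) atTop (𝓝 0) :=
    squeeze_zero' (Eventually.of_forall fun n => by positivity)
      ((hlam.eventually_ge_atTop 1).mono hbound) (tendsto_const_nhds.div_atTop hlam)
  rw [tendsto_iff_norm_sub_tendsto_zero]
  simpa [Function.comp_def, Real.sqrt_sq (norm_nonneg _)] using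
    (Real.continuous_sqrt.tendsto 0).comp hsq

end IsSubgradient

/-- Comparing `p` with the points `p + t (z - p)` of the segment towards `z` and letting
`t → 0⁺` gives the first-order optimality condition `x - p ∈ ∂f(p)`. -/
lemma IsProx.isSubgradient {f : E → EReal} {x p : E} (hbot : ∀ z, f z ≠ ⊥)
    (htop : ∃ z, f z ≠ ⊤) (hconv : ERealConvexOn f) (hp : IsProx f x p) :
    IsSubgradient f p (x - p) := by
  obtain ⟨r, hr⟩ := hp.exists_eq_coe hbot htop
  refine ⟨r, hr, fun z => ?_⟩
  induction hfz : f z using EReal.rec with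
  | bot => exact absurd hfz (hbot z)
  | top => exact le_top
  | coe s =>
    have hseg : ∀ t ∈ Set.Ioc (0 : ℝ) 1,
        r + ⟪x - p, z - p⟫_ℝ ≤ s + t * (1 / 2 * ‖z - p‖ ^ 2) := by
      rintro t ⟨ht₀, ht₁⟩
      have hw : f ((1 - t) • p + t • z) ≤ (((1 - t) * r + t * s : ℝ) : EReal) := by
        have := hconv p z (1 - t) t (by linarith) ht₀.le (by ring)
        rwa [hr, hfz, ← EReal.coe_mul, ← EReal.coe_mul, ← EReal.coe_add] at this
      have hmin := hp.le_of_le hr hw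
      rw [show x - ((1 - t) • p + t • z) = (x - p) - t • (z - p) by
          rw [sub_smul, one_smul, smul_sub]; abel,
        norm_sub_sq_real (x - p), real_inner_smul_right, norm_smul,
        Real.norm_of_nonneg ht₀.le] at hmin
      nlinarith
    have hlim : Tendsto (fun t : ℝ => s + t * (1 / 2 * ‖z - p‖ ^ 2)) (𝓝[>] 0) (𝓝 s) :=
      (Continuous.tendsto' (by fun_prop) 0 s (by simp)).mono_left nhdsWithin_le_nhds
    exact_mod_cast ge_of_tendsto hlim (eventually_of_mem (Ioc_mem_nhdsGT one_pos) hseg)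

lemma sub_sub_sub_le_inner_of_isProx {f g : E → EReal} {x y p q : E} {a₀ a₁ b₀ b₁ : ℝ}
    (hfq : IsProx f y q) (hgp : IsProx g x p) (ha₀ : f p = a₀) (ha₁ : f q = a₁)
    (hb₀ : g p = b₀) (hb₁ : g q = b₁) :
    (a₁ - b₁) - (a₀ - b₀) ≤ ⟪y - x, q - p⟫_ℝ := by
  have h₁ := hfq.le_of_le ha₁ ha₀.le
  have h₂ := hgp.le_of_le hb₀ hb₁.le
  simp only [norm_sub_sq_real] at h₁ h₂
  rw [inner_sub_left, inner_sub_right, inner_sub_right]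
  linarith

lemma exists_forall_comp_eq_add {f g : E → EReal} {P : E → E}
    (hf : ∀ x, IsProx f x (P x)) (hg : ∀ x, IsProx g x (P x))
    (hsf : ∀ x, IsSubgradient f (P x) (x - P x)) (hsg : ∀ x, IsSubgradient g (P x) (x - P x)) :
    ∃ c : ℝ, ∀ x, f (P x) = g (P x) + c := by
  set φ : E → ℝ := fun x => (f (P x)).toReal - (g (P x)).toReal
  have hφ : ∀ x y, φ y - φ x ≤ ‖y - x‖ ^ 2 := fun x y => calc
    φ y - φ x ≤ ⟪y - x, P y - P x⟫_ℝ :=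
      sub_sub_sub_le_inner_of_isProx (hf y) (hg x) (hsf x).coe_toReal.symm
        (hsf y).coe_toReal.symm (hsg x).coe_toReal.symm (hsg y).coe_toReal.symm
    _ ≤ ‖y - x‖ * ‖P y - P x‖ := real_inner_le_norm _ _
    _ ≤ ‖y - x‖ ^ 2 := by
      rw [sq]
      gcongr
      exact IsSubgradient.norm_sub_le (c := 1) (by simpa using hsf y) (by simpa using hsf x)
        one_pos
  refine ⟨φ 0, fun x => ?_⟩
  rw [← (hsf x).coe_toReal, ← (hsg x).coe_toReal, ← EReal.coe_add,
    eq_of_forall_sub_le_norm_sub_sq hφ 0 x]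
  exact congrArg _ (add_sub_cancel _ _).symm

end InnerProductSpace

section Resolvent

variable {f : H → EReal}

/-- The witness is the fixed point of the `1/2`-contraction `p ↦ J (p + 3/2 • (y - p))`, where
`J x` is a point given by `h x`. -/
lemma exists_isSubgradient_three_halves_smul {c : ℝ} (hc : 0 < c)
    (h : ∀ x, ∃ p, IsSubgradient f p (c • (x - p))) (y : H) :
    ∃ p, IsSubgradient f p ((3 / 2 * c) • (y - p)) := by
  choose J hJ using h
  have hT : ContractingWith (1 / 2) fun p => J (p + (3 / 2 : ℝ) • (y - p)) := by
    refine ⟨by norm_num, LipschitzWith.of_dist_le_mul fun p q => ?_⟩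
    rw [dist_eq_norm, dist_eq_norm]
    refine ((hJ _).norm_sub_le (hJ _) hc).trans (le_of_eq ?_)
    rw [show p + (3 / 2 : ℝ) • (y - p) - (q + (3 / 2 : ℝ) • (y - q)) = (-(1 / 2) : ℝ) • (p - q)
      by module, norm_smul]
    norm_num
  obtain ⟨p, hp, -⟩ := hT.exists_fixedPoint 0 (edist_ne_top _ _)
  refine ⟨p, ?_⟩
  have := hJ (p + (3 / 2 : ℝ) • (y - p))
  rw [hp.eq, add_sub_cancel_left, smul_smul] at this
  rwa [mul_comm]

lemma exists_isSubgradient_pow_smul (h : ∀ x, ∃ p, IsSubgradient f p (x - p)) (n : ℕ)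
    (y : H) : ∃ p, IsSubgradient f p (((3 : ℝ) / 2) ^ n • (y - p)) := by
  induction n generalizing y with
  | zero => simpa using h y
  | succ n ih =>
    obtain ⟨p, hp⟩ := exists_isSubgradient_three_halves_smul (by positivity) ih y
    exact ⟨p, by rwa [pow_succ, mul_comm]⟩

end Resolvent

lemma le_add_of_eq_add_on_range {f g : H → EReal} {P : H → H} {c : ℝ}
    (hf : LowerSemicontinuous f) (hg : ∀ x, IsSubgradient g (P x) (x - P x))
    (hc : ∀ x, f (P x) = g (P x) + c) (y : H) : f y ≤ g y + c := by
  induction hgy : g y using EReal.rec with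
  | bot => exact absurd hgy ((hg 0).ne_bot y)
  | top => simp
  | coe t =>
    choose p hp using fun n => exists_isSubgradient_pow_smul (fun x => ⟨P x, hg x⟩) n y
    have hP : ∀ n, P (p n + ((3 : ℝ) / 2) ^ n • (y - p n)) = p n := fun n =>
      (hg _).eq_of_sub (by rw [add_sub_cancel_left]; exact hp n)
    have hfp : ∀ n, f (p n) ≤ t + c := fun n => by
      rw [← hP n, hc, hP n, ← hgy]
      exact add_le_add_left ((hp n).le_of_smul_sub (by positivity)) _
    have hlim := (hg 0).tendsto_of_smul_sub hgy
      (tendsto_pow_atTop_atTop_of_one_lt (by norm_num)) hp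
    by_contra hlt
    obtain ⟨n, hn⟩ := (hlim.eventually (hf y _ (not_le.mp hlt))).exists
    exact (hn.trans_le (hfp n)).false

/-- **Moreau's determination theorem.** If two functions in `Γ₀(H)` have the same proximal
operator, then they differ by a constant. -/
theorem prox_eq_imp_eq_add_const
    (f g : H → EReal) (hf : Gamma0 f) (hg : Gamma0 g)
    (proxf proxg : H → H)
    (hproxf : ∀ x, IsProx f x (proxf x)) (hproxg : ∀ x, IsProx g x (proxg x))
    (h : ∀ x, proxf x = proxg x) :
    ∃ c : ℝ, ∀ x, f x = g x + (c : EReal) := by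
  obtain ⟨hf_top, hf_bot, hf_conv, hf_lsc⟩ := hf
  obtain ⟨hg_top, hg_bot, hg_conv, hg_lsc⟩ := hg
  have hproxg' : ∀ x, IsProx g x (proxf x) := fun x => h x ▸ hproxg x
  have hsf := fun x => (hproxf x).isSubgradient hf_bot hf_top hf_conv
  have hsg := fun x => (hproxg' x).isSubgradient hg_bot hg_top hg_conv
  obtain ⟨c, hc⟩ := exists_forall_comp_eq_add hproxf hproxg' hsf hsg
  refine ⟨c, fun y => le_antisymm (le_add_of_eq_add_on_range hf_lsc hsg hc y) ?_⟩
  have hgf := le_add_of_eq_add_on_range (c := -c) hg_lsc hsf (fun x => by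
    rw [hc, add_assoc, ← EReal.coe_add, add_neg_cancel, EReal.coe_zero, add_zero]) y
  calc g y + c ≤ f y + ↑(-c) + c := add_le_add_left hgf _
    _ = f y := by rw [add_assoc, ← EReal.coe_add, neg_add_cancel, EReal.coe_zero, add_zero]
end
end

section
/- Let H be a real Hilbert space and let f, g : H → ℝ be Gâteaux differentiable convex functions that are bounded from below. If ‖∇f(x)‖ ≤ ‖∇g(x)‖ for all x ∈ H, then f(x) − inf f ≤ g(x) − inf g for all x ∈ H. -/
open scoped InnerProductSpace
noncomputable section

variable {H : Type*} [NormedAddCommGroup H] [InnerProductSpace ℝ H] [CompleteSpace H]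

/-- `g` is the Gâteaux gradient of `f` at `x`: for every direction `v`, the function
`t ↦ f (x + t • v)` is differentiable at `0` with derivative `⟪g, v⟫`. -/
def HasGateauxGradientAt (f : H → ℝ) (g x : H) : Prop :=
  ∀ v : H, HasDerivAt (fun t : ℝ => f (x + t • v)) (⟪g, v⟫_ℝ) 0

/-!
Run the proximal point method `u (n + 1) = u n - τ ∇g (u (n + 1))` for `g`, starting at `x`.
A step lowers `g` by at least `τ ‖∇g (u (n + 1))‖²` and `f` by at most
`τ ‖∇g (u n)‖ ‖∇g (u (n + 1))‖`, and `‖∇g (u n)‖` decreases, so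
`f x - f (u N) ≤ g x - g (u N) + τ ‖∇g x‖²`. Along the iteration `g (u N) → inf g`, so it remains
to see that also `f (u N) → inf f`. As `‖∇g (u N)‖² = O(1 / N)` while `‖u N - x‖² = O(N)`, the
subgradient inequality for `f` at `u N` first gives the crude bound
`f - inf f ≤ 5/2 (g - inf g)`; applied at `u N`, it gives `f (u N) → inf f`. Finally `τ → 0`.
-/

open Set Filter Topology

lemma le_of_forall_pos_le_add_mul {a b c : ℝ} (h : ∀ τ > 0, a ≤ b + τ * c) : a ≤ b := by
  have hlim : Tendsto (fun τ => b + τ * c) (𝓝[>] 0) (𝓝 b) := by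
    have : Continuous fun τ : ℝ => b + τ * c := by fun_prop
    simpa using (this.tendsto 0).mono_left nhdsWithin_le_nhds
  exact ge_of_tendsto hlim (eventually_nhdsWithin_of_forall h)

variable {E : Type*} [NormedAddCommGroup E] [InnerProductSpace ℝ E]

namespace HasGateauxGradientAt

variable {f h : E → ℝ} {a b x : E}

lemma add (hf : HasGateauxGradientAt f a x) (hh : HasGateauxGradientAt h b x) :
    HasGateauxGradientAt (fun y => f y + h y) (a + b) x := fun v => by
  rw [inner_add_left]
  exact (hf v).add (hh v)

lemma const_mul (hf : HasGateauxGradientAt f a x) (c : ℝ) :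
    HasGateauxGradientAt (fun y => c * f y) (c • a) x := fun v => by
  simpa only [real_inner_smul_left] using (hf v).const_mul c

lemma eq_zero_of_isMinOn (hf : HasGateauxGradientAt f a x) (hmin : IsMinOn f univ x) : a = 0 := by
  have hloc : IsLocalMin (fun t : ℝ => f (x + t • a)) 0 :=
    Eventually.of_forall fun t => by simpa using hmin (mem_univ (x + t • a))
  simpa using hloc.hasDerivAt_eq_zero (hf a)

end HasGateauxGradientAt

lemma hasGateauxGradientAt_half_norm_sub_sq (x p : E) :
    HasGateauxGradientAt (fun y => ‖y - x‖ ^ 2 / 2) (p - x) p := fun v => by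
  have hline : HasDerivAt (fun t : ℝ => p + t • v - x) v 0 := by
    simpa using (((hasDerivAt_id (0 : ℝ)).smul_const v).const_add p).sub_const x
  simpa using hline.norm_sq.div_const 2

namespace ConvexOn

variable {f : E → ℝ} {a x : E}

lemma inner_sub_le_of_hasGateauxGradientAt (hf : ConvexOn ℝ univ f)
    (ha : HasGateauxGradientAt f a x) (y : E) : ⟪a, y - x⟫_ℝ ≤ f y - f x := by
  have hline : ConvexOn ℝ univ fun t : ℝ => f (x + t • (y - x)) := by
    simpa [Function.comp_def, AffineMap.lineMap_apply, add_comm] using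
      hf.comp_affineMap (AffineMap.lineMap x y)
  simpa [slope_def_field] using
    hline.le_slope_of_hasDerivAt (mem_univ 0) (mem_univ 1) one_pos (ha (y - x))

lemma sub_le_norm_mul_norm_sub_of_hasGateauxGradientAt (hf : ConvexOn ℝ univ f)
    (ha : HasGateauxGradientAt f a x) (y : E) : f x - f y ≤ ‖a‖ * ‖x - y‖ := by
  have h := hf.inner_sub_le_of_hasGateauxGradientAt ha y
  rw [← neg_sub x y, inner_neg_right] at h
  linarith [real_inner_le_norm a (x - y)]

lemma inner_sub_sub_nonneg_of_hasGateauxGradientAt {b y : E} (hf : ConvexOn ℝ univ f)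
    (ha : HasGateauxGradientAt f a x) (hb : HasGateauxGradientAt f b y) :
    0 ≤ ⟪a - b, x - y⟫_ℝ := by
  have hxy := hf.inner_sub_le_of_hasGateauxGradientAt ha y
  have hyx := hf.inner_sub_le_of_hasGateauxGradientAt hb x
  rw [← neg_sub x y, inner_neg_right] at hxy
  rw [inner_sub_left]
  linarith

lemma le_of_tendsto_of_hasGateauxGradientAt {α : Type*} {l : Filter α} [l.NeBot] {z : α → E}
    {m : ℝ} (hf : ConvexOn ℝ univ f) (ha : HasGateauxGradientAt f a x)
    (hz : Tendsto z l (𝓝 x)) (hm : Tendsto (f ∘ z) l (𝓝 m)) : f x ≤ m := by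
  have hlim : Tendsto (fun n => f (z n) - ⟪a, z n - x⟫_ℝ) l (𝓝 m) := by
    simpa using hm.sub (tendsto_const_nhds.inner (hz.sub_const x))
  refine ge_of_tendsto hlim (Eventually.of_forall fun n => ?_)
  linarith [hf.inner_sub_le_of_hasGateauxGradientAt ha (z n)]

lemma add_strongConvexOn {s : Set E} {g : E → ℝ} {m : ℝ} (hf : ConvexOn ℝ s f)
    (hg : StrongConvexOn s m g) : StrongConvexOn s m (f + g) := by
  have h := (uniformConvexOn_zero.2 hf).add hg
  rwa [zero_add] at h

end ConvexOn

lemma strongConvexOn_half_norm_sub_sq (x : E) :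
    StrongConvexOn univ 1 fun y : E => ‖y - x‖ ^ 2 / 2 := by
  rw [strongConvexOn_iff_convex]
  have h : (fun y : E => ‖y - x‖ ^ 2 / 2 - 1 / 2 * ‖y‖ ^ 2) =
      fun y => -(innerₛₗ ℝ x) y + ‖x‖ ^ 2 / 2 := by
    ext y
    rw [norm_sub_sq_real, innerₛₗ_apply_apply, real_inner_comm]
    ring
  rw [h]
  exact ((-(innerₛₗ ℝ x)).convexOn convex_univ).add_const _

namespace StrongConvexOn

variable {h : E → ℝ} {m : ℝ}

lemma cauchySeq_of_tendsto_iInf (hh : StrongConvexOn univ m h) (hm : 0 < m)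
    (hb : BddBelow (range h)) {y : ℕ → E} (hy : Tendsto (h ∘ y) atTop (𝓝 (⨅ x, h x))) :
    CauchySeq y := by
  rw [Metric.cauchySeq_iff']
  intro ε hε
  have hδ : (⨅ x, h x) < (⨅ x, h x) + m * ε ^ 2 / 8 := lt_add_of_pos_right _ (by positivity)
  obtain ⟨N, hN⟩ := eventually_atTop.1 (hy.eventually (gt_mem_nhds hδ))
  refine ⟨N, fun n hn => ?_⟩
  have hmid := hh.2 (mem_univ (y n)) (mem_univ (y N)) (by norm_num : (0 : ℝ) ≤ 1 / 2)
    (by norm_num : (0 : ℝ) ≤ 1 / 2) (by norm_num)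
  have hinf := ciInf_le hb ((1 / 2 : ℝ) • y n + (1 / 2 : ℝ) • y N)
  have hn' := hN n hn
  have hN' := hN N le_rfl
  simp only [Function.comp_apply, smul_eq_mul] at hmid hn' hN'
  -- at the midpoint: `m ‖y n - y N‖² / 8 ≤ (h (y n) + h (y N)) / 2 - ⨅ x, h x < m ε² / 8`
  rw [dist_eq_norm, ← pow_lt_pow_iff_left₀ (norm_nonneg _) hε.le two_ne_zero]
  nlinarith

lemma exists_isMinOn [CompleteSpace E] {h' : E → E} (hh : StrongConvexOn univ m h) (hm : 0 < m)
    (hb : BddBelow (range h)) (hh' : ∀ x, HasGateauxGradientAt h (h' x) x) :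
    ∃ p, IsMinOn h univ p := by
  obtain ⟨s, -, hs, hsh⟩ := exists_seq_tendsto_sInf (range_nonempty h) hb
  choose y hy using hsh
  have hmin : Tendsto (h ∘ y) atTop (𝓝 (⨅ x, h x)) := by
    rwa [show h ∘ y = s from funext hy]
  obtain ⟨p, hp⟩ := cauchySeq_tendsto_of_complete (hh.cauchySeq_of_tendsto_iInf hm hb hmin)
  have hconv : ConvexOn ℝ univ h := hh.convexOn fun r => by positivity
  exact ⟨p, fun z _ => (hconv.le_of_tendsto_of_hasGateauxGradientAt (hh' p) hp hmin).trans
    (ciInf_le hb z)⟩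

end StrongConvexOn

variable {f g : E → ℝ} {f' g' : E → E} {τ : ℝ}

lemma exists_sub_eq_smul_of_convexOn [CompleteSpace E] (hg : ConvexOn ℝ univ g)
    (hg' : ∀ x, HasGateauxGradientAt g (g' x) x) (hgb : BddBelow (range g)) (hτ : 0 ≤ τ)
    (x : E) : ∃ p, x - p = τ • g' p := by
  set h : E → ℝ := fun y => τ * g y + ‖y - x‖ ^ 2 / 2
  have hh : StrongConvexOn univ 1 h :=
    (hg.smul hτ).add_strongConvexOn (strongConvexOn_half_norm_sub_sq x)
  have hh' : ∀ y, HasGateauxGradientAt h (τ • g' y + (y - x)) y := fun y =>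
    ((hg' y).const_mul τ).add (hasGateauxGradientAt_half_norm_sub_sq x y)
  have hb : BddBelow (range h) := by
    obtain ⟨B, hB⟩ := hgb
    refine ⟨τ * B, ?_⟩
    rintro _ ⟨y, rfl⟩
    have := mul_le_mul_of_nonneg_left (hB (mem_range_self y)) hτ
    have : 0 ≤ ‖y - x‖ ^ 2 / 2 := by positivity
    simp only [h]
    linarith
  obtain ⟨p, hp⟩ := hh.exists_isMinOn one_pos hb hh'
  refine ⟨p, ?_⟩
  have := (hh' p).eq_zero_of_isMinOn hp
  linear_combination (norm := module) -this

/-- `u (n + 1) = prox_{τ g} (u n)`, written through the optimality condition of the proximal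
problem. -/
def IsProximalSeq (g' : E → E) (τ : ℝ) (u : ℕ → E) : Prop :=
  ∀ n, u n - u (n + 1) = τ • g' (u (n + 1))

lemma exists_isProximalSeq [CompleteSpace E] (hg : ConvexOn ℝ univ g)
    (hg' : ∀ x, HasGateauxGradientAt g (g' x) x) (hgb : BddBelow (range g)) (hτ : 0 ≤ τ)
    (x : E) : ∃ u, u 0 = x ∧ IsProximalSeq g' τ u := by
  choose P hP using exists_sub_eq_smul_of_convexOn hg hg' hgb hτ
  exact ⟨fun n => P^[n] x, rfl, fun n => by simpa only [Function.iterate_succ_apply'] using hP _⟩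

namespace IsProximalSeq

variable {u : ℕ → E}

lemma norm_sub_succ (hu : IsProximalSeq g' τ u) (hτ : 0 ≤ τ) (n : ℕ) :
    ‖u n - u (n + 1)‖ = τ * ‖g' (u (n + 1))‖ := by
  rw [hu n, norm_smul, Real.norm_of_nonneg hτ]

lemma mul_sq_norm_gradient_succ_le (hu : IsProximalSeq g' τ u) (hg : ConvexOn ℝ univ g)
    (hg' : ∀ x, HasGateauxGradientAt g (g' x) x) (n : ℕ) :
    τ * ‖g' (u (n + 1))‖ ^ 2 ≤ g (u n) - g (u (n + 1)) := by
  have h := hg.inner_sub_le_of_hasGateauxGradientAt (hg' (u (n + 1))) (u n)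
  rwa [hu n, real_inner_smul_right, real_inner_self_eq_norm_sq] at h

lemma antitone_comp (hu : IsProximalSeq g' τ u) (hg : ConvexOn ℝ univ g)
    (hg' : ∀ x, HasGateauxGradientAt g (g' x) x) (hτ : 0 ≤ τ) : Antitone (g ∘ u) :=
  antitone_nat_of_succ_le fun n => sub_nonneg.1 <|
    (mul_nonneg hτ (sq_nonneg _)).trans (hu.mul_sq_norm_gradient_succ_le hg hg' n)

lemma antitone_norm_gradient (hu : IsProximalSeq g' τ u) (hg : ConvexOn ℝ univ g)
    (hg' : ∀ x, HasGateauxGradientAt g (g' x) x) (hτ : 0 < τ) :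
    Antitone fun n => ‖g' (u n)‖ := by
  refine antitone_nat_of_succ_le fun n => ?_
  have hmono := hg.inner_sub_sub_nonneg_of_hasGateauxGradientAt (hg' (u n)) (hg' (u (n + 1)))
  rw [hu n, real_inner_smul_right, inner_sub_left, real_inner_self_eq_norm_sq] at hmono
  have hsq : ‖g' (u (n + 1))‖ ^ 2 ≤ ‖g' (u n)‖ * ‖g' (u (n + 1))‖ := by
    nlinarith [real_inner_le_norm (g' (u n)) (g' (u (n + 1)))]
  nlinarith [norm_nonneg (g' (u n)), norm_nonneg (g' (u (n + 1)))]

lemma fejer (hu : IsProximalSeq g' τ u) (hg : ConvexOn ℝ univ g)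
    (hg' : ∀ x, HasGateauxGradientAt g (g' x) x) (hτ : 0 ≤ τ) (z : E) (N : ℕ) :
    2 * τ * N * (g (u N) - g z) + ‖u N - z‖ ^ 2 ≤ ‖u 0 - z‖ ^ 2 := by
  have hstep : ∀ n, 2 * τ * (g (u (n + 1)) - g z) + ‖u (n + 1) - z‖ ^ 2 ≤ ‖u n - z‖ ^ 2 := by
    intro n
    have hsub := hg.inner_sub_le_of_hasGateauxGradientAt (hg' (u (n + 1))) z
    have hexp : u n - z = (u (n + 1) - z) + τ • g' (u (n + 1)) := by rw [← hu n]; abel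
    rw [← neg_sub (u (n + 1)) z, inner_neg_right] at hsub
    rw [hexp, norm_add_sq_real, real_inner_smul_right, real_inner_comm]
    nlinarith [mul_le_mul_of_nonneg_left hsub hτ, sq_nonneg ‖τ • g' (u (n + 1))‖]
  induction N with
  | zero => simp
  | succ N ih =>
    have hanti : g (u (N + 1)) ≤ g (u N) := hu.antitone_comp hg hg' hτ N.le_succ
    push_cast
    nlinarith [hstep N, mul_nonneg (mul_nonneg hτ N.cast_nonneg) (sub_nonneg.2 hanti)]

lemma mul_sq_norm_gradient_le (hu : IsProximalSeq g' τ u) (hg : ConvexOn ℝ univ g)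
    (hg' : ∀ x, HasGateauxGradientAt g (g' x) x) (hτ : 0 < τ) (N : ℕ) :
    N * τ * ‖g' (u N)‖ ^ 2 ≤ g (u 0) - g (u N) := by
  induction N with
  | zero => simp
  | succ N ih =>
    have hanti : ‖g' (u (N + 1))‖ ^ 2 ≤ ‖g' (u N)‖ ^ 2 :=
      pow_le_pow_left₀ (norm_nonneg _) (hu.antitone_norm_gradient hg hg' hτ N.le_succ) 2
    have hstep := hu.mul_sq_norm_gradient_succ_le hg hg' N
    push_cast
    nlinarith [mul_le_mul_of_nonneg_left hanti (by positivity : (0 : ℝ) ≤ N * τ)]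

lemma norm_gradient_mul_norm_sub_le (hu : IsProximalSeq g' τ u) (hg : ConvexOn ℝ univ g)
    (hg' : ∀ x, HasGateauxGradientAt g (g' x) x) (hτ : 0 < τ) (N : ℕ) :
    ‖g' (u N)‖ * ‖u N - u 0‖ ≤ 3 / 2 * (g (u 0) - g (u N)) := by
  rcases N.eq_zero_or_pos with rfl | hN
  · simp
  have hT : 0 < N * τ := by positivity
  have hgrad := hu.mul_sq_norm_gradient_le hg hg' hτ N
  have hdist := hu.fejer hg hg' hτ.le (u 0) N
  rw [sub_self, norm_zero] at hdist
  -- AM-GM: `2 a b ≤ T a² + b² / T` with `T = N τ`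
  nlinarith [sq_nonneg (N * τ * ‖g' (u N)‖ - ‖u N - u 0‖)]

lemma tendsto_iInf (hu : IsProximalSeq g' τ u) (hg : ConvexOn ℝ univ g)
    (hg' : ∀ x, HasGateauxGradientAt g (g' x) x) (hgb : BddBelow (range g)) (hτ : 0 < τ) :
    Tendsto (g ∘ u) atTop (𝓝 (⨅ x, g x)) := by
  refine tendsto_order.2 ⟨fun a ha => Eventually.of_forall fun n => ha.trans_le (ciInf_le hgb _),
    fun a ha => ?_⟩
  obtain ⟨z, hz⟩ := exists_lt_of_ciInf_lt ha
  have hlarge : Tendsto (fun N : ℕ => (N : ℝ) * (2 * τ * (a - g z))) atTop atTop :=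
    tendsto_natCast_atTop_atTop.atTop_mul_const (by nlinarith)
  filter_upwards [hlarge.eventually_gt_atTop (‖u 0 - z‖ ^ 2)] with N hN
  have hfejer := hu.fejer hg hg' hτ.le z N
  have hNpos : (0 : ℝ) < N := Nat.cast_pos.2 <| Nat.pos_of_ne_zero <| by
    rintro rfl
    simp only [CharP.cast_eq_zero, zero_mul] at hN
    linarith [sq_nonneg ‖u 0 - z‖]
  simp only [Function.comp_apply]
  nlinarith [sq_nonneg ‖u N - z‖, mul_pos hτ hNpos]

lemma tendsto_norm_gradient (hu : IsProximalSeq g' τ u) (hg : ConvexOn ℝ univ g)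
    (hg' : ∀ x, HasGateauxGradientAt g (g' x) x) (hgb : BddBelow (range g)) (hτ : 0 < τ) :
    Tendsto (fun n => ‖g' (u n)‖) atTop (𝓝 0) := by
  refine tendsto_order.2 ⟨fun a ha => Eventually.of_forall fun n => ha.trans_le (norm_nonneg _),
    fun ε hε => ?_⟩
  have hlarge : Tendsto (fun N : ℕ => (N : ℝ) * (τ * ε ^ 2)) atTop atTop :=
    tendsto_natCast_atTop_atTop.atTop_mul_const (by positivity)
  filter_upwards [hlarge.eventually_gt_atTop (g (u 0) - ⨅ x, g x)] with N hN
  have hgrad := hu.mul_sq_norm_gradient_le hg hg' hτ N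
  have hinf := ciInf_le hgb (u N)
  rw [← pow_lt_pow_iff_left₀ (norm_nonneg _) hε.le two_ne_zero]
  have hNpos : (0 : ℝ) < N * τ := by
    refine mul_pos (Nat.cast_pos.2 <| Nat.pos_of_ne_zero ?_) hτ
    rintro rfl
    simp only [CharP.cast_eq_zero, zero_mul] at hN
    linarith
  nlinarith

lemma sub_le_sub_add (hu : IsProximalSeq g' τ u) (hg : ConvexOn ℝ univ g)
    (hg' : ∀ x, HasGateauxGradientAt g (g' x) x) (hf : ConvexOn ℝ univ f)
    (hf' : ∀ x, HasGateauxGradientAt f (f' x) x) (hfg : ∀ x, ‖f' x‖ ≤ ‖g' x‖) (hτ : 0 < τ)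
    (N : ℕ) : f (u 0) - f (u N) ≤ g (u 0) - g (u N) + τ * ‖g' (u 0)‖ ^ 2 := by
  have hstep : ∀ n, f (u n) - f (u (n + 1)) ≤ τ * ‖g' (u n)‖ * ‖g' (u (n + 1))‖ := fun n => by
    have h := hf.sub_le_norm_mul_norm_sub_of_hasGateauxGradientAt (hf' (u n)) (u (n + 1))
    rw [hu.norm_sub_succ hτ.le] at h
    nlinarith [mul_le_mul_of_nonneg_right (hfg (u n))
      (mul_nonneg hτ.le (norm_nonneg (g' (u (n + 1)))))]
  have hanti := hu.antitone_norm_gradient hg hg' hτ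
  suffices h : ∀ N : ℕ, f (u 0) - f (u N) ≤
      g (u 0) - g (u N) + τ * ‖g' (u 0)‖ * (‖g' (u 0)‖ - ‖g' (u N)‖) by
    nlinarith [h N, mul_nonneg (mul_nonneg hτ.le (norm_nonneg (g' (u 0)))) (norm_nonneg (g' (u N)))]
  -- the excess `τ aₙ₊₁ (aₙ - aₙ₊₁)` of step `n` over the drop of `g` is at most
  -- `τ a₀ (aₙ - aₙ₊₁)`, which telescopes (`aₙ = ‖g' (u n)‖`)
  intro N
  induction N with
  | zero => simp
  | succ N ih =>
    have h1 := hstep N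
    have h2 := hu.mul_sq_norm_gradient_succ_le hg hg' N
    have h3 : ‖g' (u (N + 1))‖ ≤ ‖g' (u N)‖ := hanti N.le_succ
    have h4 : ‖g' (u (N + 1))‖ ≤ ‖g' (u 0)‖ := hanti (Nat.zero_le _)
    nlinarith [mul_nonneg hτ.le (mul_nonneg (sub_nonneg.2 h3) (sub_nonneg.2 h4))]

end IsProximalSeq

lemma sub_iInf_le_five_halves_mul [CompleteSpace E] (hf : ConvexOn ℝ univ f)
    (hg : ConvexOn ℝ univ g) (hf' : ∀ x, HasGateauxGradientAt f (f' x) x)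
    (hg' : ∀ x, HasGateauxGradientAt g (g' x) x) (hgb : BddBelow (range g))
    (hfg : ∀ x, ‖f' x‖ ≤ ‖g' x‖) (x : E) :
    f x - (⨅ y, f y) ≤ 5 / 2 * (g x - ⨅ y, g y) := by
  refine sub_le_comm.1 (le_ciInf fun z => sub_le_comm.1 ?_)
  refine le_of_forall_pos_le_add_mul (c := ‖g' x‖ ^ 2) fun τ hτ => ?_
  obtain ⟨u, rfl, hu⟩ := exists_isProximalSeq hg hg' hgb hτ.le x
  have hbound : ∀ N, f (u 0) - f z ≤
      5 / 2 * (g (u 0) - ⨅ y, g y) + τ * ‖g' (u 0)‖ ^ 2 + ‖g' (u N)‖ * ‖u 0 - z‖ := by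
    intro N
    have hfu := hu.sub_le_sub_add hg hg' hf hf' hfg hτ N
    have hfz := hf.sub_le_norm_mul_norm_sub_of_hasGateauxGradientAt (hf' (u N)) z
    have htri : ‖g' (u N)‖ * ‖u N - z‖ ≤ ‖g' (u N)‖ * ‖u N - u 0‖ + ‖g' (u N)‖ * ‖u 0 - z‖ := by
      rw [← mul_add]
      exact mul_le_mul_of_nonneg_left (norm_sub_le_norm_sub_add_norm_sub _ _ _) (norm_nonneg _)
    have hfar := hu.norm_gradient_mul_norm_sub_le hg hg' hτ N
    have hinf := ciInf_le hgb (u N)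
    nlinarith [mul_le_mul_of_nonneg_right (hfg (u N)) (norm_nonneg (u N - z))]
  refine ge_of_tendsto' (x := atTop) ?_ hbound
  simpa using tendsto_const_nhds.add ((hu.tendsto_norm_gradient hg hg' hgb hτ).mul_const ‖u 0 - z‖)

theorem comparison_of_gradient_norm_le_general
    (f g : H → ℝ) (f' g' : H → H)
    (hfconv : ConvexOn ℝ Set.univ f) (hgconv : ConvexOn ℝ Set.univ g)
    (hf' : ∀ x, HasGateauxGradientAt f (f' x) x)
    (hg' : ∀ x, HasGateauxGradientAt g (g' x) x)
    (hgb : BddBelow (Set.range g))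
    (h : ∀ x, ‖f' x‖ ≤ ‖g' x‖) :
    ∀ x, f x - (⨅ y, f y) ≤ g x - (⨅ y, g y) := by
  intro x
  refine le_of_forall_pos_le_add_mul (c := ‖g' x‖ ^ 2) fun τ hτ => ?_
  obtain ⟨u, rfl, hu⟩ := exists_isProximalSeq hgconv hg' hgb hτ.le x
  have hbound : ∀ N, f (u 0) - (⨅ y, f y) ≤
      g (u 0) - (⨅ y, g y) + τ * ‖g' (u 0)‖ ^ 2 + 3 / 2 * (g (u N) - ⨅ y, g y) := fun N => by
    linarith [hu.sub_le_sub_add hgconv hg' hfconv hf' h hτ N,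
      sub_iInf_le_five_halves_mul hfconv hgconv hf' hg' hgb h (u N)]
  refine ge_of_tendsto' (x := atTop) ?_ hbound
  simpa using tendsto_const_nhds.add
    (((hu.tendsto_iInf hgconv hg' hgb hτ).sub_const (⨅ y, g y)).const_mul (3 / 2))

/-- Comparison principle for convex functions through the norms of their gradients. -/
theorem comparison_of_gradient_norm_le
    (f g : H → ℝ) (f' g' : H → H)
    (hfconv : ConvexOn ℝ Set.univ f) (hgconv : ConvexOn ℝ Set.univ g)
    (hf' : ∀ x, HasGateauxGradientAt f (f' x) x)
    (hg' : ∀ x, HasGateauxGradientAt g (g' x) x)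
    (hfb : BddBelow (Set.range f)) (hgb : BddBelow (Set.range g))
    (h : ∀ x, ‖f' x‖ ≤ ‖g' x‖) :
    ∀ x, f x - (⨅ y, f y) ≤ g x - (⨅ y, g y) :=
  comparison_of_gradient_norm_le_general f g f' g' hfconv hgconv hf' hg' hgb h
end
end

section
/- Let H be a real Hilbert space, let f, g ∈ Γ0(H), and let x₀ ∈ dom f ∩ dom g. If ‖prox_f(x) − x₀‖ ≤ ‖prox_g(x) − x₀‖ for all x ∈ H, then g(x) − g(x₀) ≤ f(x) − f(x₀) for all x ∈ H. -/
open scoped InnerProductSpace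
noncomputable section

variable {H : Type*} [NormedAddCommGroup H] [InnerProductSpace ℝ H] [CompleteSpace H]

/-!
Write `e_f x = f (prox_f x) + ½‖x - prox_f x‖²` for the Moreau envelope. The function
`A x = ½‖x - x₀‖² - e_f x + f x₀` is convex with gradient `prox_f x - x₀` and infimum `0`; the
analogous `B` built from `g` has, in addition, a `1`-Lipschitz gradient. Gradient descent on `B`
from `x` with a small step `τ` lowers `B` by about `τ‖∇B‖²` per step, while, because
`‖∇A‖ ≤ ‖∇B‖`, `A` drops by at most `τ‖∇B‖²`. Since `∑ ‖∇B‖²` is finite, along the iterates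
`‖∇A‖ · (distance travelled)` becomes small, so `A` becomes small too; hence `A x ≤ B x`, i.e.
`e_g - g x₀ ≤ e_f - f x₀`. For an affine minorant `⟪w, ·⟫ + β` of `g`, evaluating this at `y + w`
gives `⟪w, y⟫ + β - g x₀ ≤ f y - f x₀`, and `g` is the supremum of its affine minorants.
-/

open Filter Topology Finset

lemma le_of_forall_le_add_mul {a b c : ℝ} (h : ∀ t ∈ Set.Ioc (0 : ℝ) 1, a ≤ b + t * c) :
    a ≤ b := by
  have hlim : Tendsto (fun t : ℝ => b + t * c) (𝓝[>] 0) (𝓝 b) :=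
    ((continuous_const.add (continuous_id.mul continuous_const)).tendsto' 0 b
      (by simp)).mono_left nhdsWithin_le_nhds
  exact ge_of_tendsto hlim (mem_of_superset (Ioc_mem_nhdsGT one_pos) h)

lemma exists_mul_add_sum_le {u : ℕ → ℝ} (hsum : Summable fun k => u k ^ 2)
    (D : ℝ) {ε : ℝ} (hε : 0 < ε) : ∃ k, u k * (D + ∑ j ∈ range k, u j) ≤ ε := by
  by_contra! hlt
  set S := ∑' k, u k ^ 2
  have hS : 0 ≤ S := tsum_nonneg fun k => sq_nonneg _
  -- otherwise `u k ^ 2` would dominate a multiple of the harmonic series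
  have harmonic_le : ∀ k : ℕ, 1 / ((k : ℝ) + 1) ≤ (2 * (D ^ 2 + S) / ε ^ 2) * u k ^ 2 := by
    intro k
    set s := ∑ j ∈ range k, u j
    have hs : s ^ 2 ≤ k * S := by
      refine sq_sum_le_card_mul_sum_sq.trans ?_
      rw [card_range]
      exact mul_le_mul_of_nonneg_left (hsum.sum_le_tsum _ fun j _ => sq_nonneg _) k.cast_nonneg
    have hDs : (D + s) ^ 2 ≤ 2 * (D ^ 2 + S) * (k + 1) := by
      nlinarith [sq_nonneg (D - s), mul_nonneg (k.cast_nonneg : (0 : ℝ) ≤ k) (sq_nonneg D)]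
    have hε2 : ε ^ 2 < u k ^ 2 * (2 * (D ^ 2 + S) * (k + 1)) :=
      calc ε ^ 2 < (u k * (D + s)) ^ 2 := pow_lt_pow_left₀ (hlt k) hε.le two_ne_zero
        _ = u k ^ 2 * (D + s) ^ 2 := mul_pow _ _ _
        _ ≤ u k ^ 2 * (2 * (D ^ 2 + S) * (k + 1)) := by gcongr
    rw [div_le_iff₀ (by positivity)]
    field_simp
    nlinarith
  have : Summable fun k : ℕ => 1 / ((k : ℝ) + 1) :=
    (hsum.mul_left _).of_nonneg_of_le (fun k => by positivity) harmonic_le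
  exact Real.not_summable_one_div_natCast ((summable_nat_add_iff 1).mp (by exact_mod_cast this))

section GradientDescent

variable {E : Type*} [NormedAddCommGroup E] [InnerProductSpace ℝ E]

def IsSubgradientMap (A : E → ℝ) (a : E → E) : Prop :=
  ∀ v w, A w + ⟪a w, v - w⟫_ℝ ≤ A v

def IsSmoothGradientMap (B : E → ℝ) (b : E → E) : Prop :=
  ∀ v w, B v ≤ B w + ⟪b w, v - w⟫_ℝ + 1 / 2 * ‖v - w‖ ^ 2

def gradDescent (b : E → E) (τ : ℝ) (x : E) (k : ℕ) : E :=
  (fun v => v - τ • b v)^[k] x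

variable {A B : E → ℝ} {a b : E → E} {τ : ℝ}

@[simp]
lemma gradDescent_zero (x : E) : gradDescent b τ x 0 = x :=
  rfl

lemma gradDescent_succ (x : E) (k : ℕ) :
    gradDescent b τ x (k + 1) = gradDescent b τ x k - τ • b (gradDescent b τ x k) :=
  Function.iterate_succ_apply' _ _ _

lemma IsSmoothGradientMap.le_sub_smul (hB : IsSmoothGradientMap B b) (v : E) :
    B (v - τ • b v) ≤ B v - τ * (1 - τ / 2) * ‖b v‖ ^ 2 := by
  have h := hB (v - τ • b v) v
  rw [sub_sub_cancel_left, inner_neg_right, real_inner_smul_right, real_inner_self_eq_norm_sq,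
    norm_neg, norm_smul, Real.norm_eq_abs, mul_pow, sq_abs] at h
  linarith

lemma IsSubgradientMap.le_sub_smul (hA : IsSubgradientMap A a) (hτ : 0 ≤ τ) {v : E}
    (hab : ‖a v‖ ≤ ‖b v‖) : A v ≤ A (v - τ • b v) + τ * ‖b v‖ ^ 2 := by
  have h := hA (v - τ • b v) v
  rw [sub_sub_cancel_left, inner_neg_right, real_inner_smul_right] at h
  have hinner : ⟪a v, b v⟫_ℝ ≤ ‖b v‖ ^ 2 :=
    (real_inner_le_norm _ _).trans (by rw [sq]; gcongr)
  nlinarith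

lemma IsSmoothGradientMap.mul_sum_sq_le (hB : IsSmoothGradientMap B b) (x : E) (K : ℕ) :
    τ * (1 - τ / 2) * ∑ k ∈ range K, ‖b (gradDescent b τ x k)‖ ^ 2
      ≤ B x - B (gradDescent b τ x K) := by
  have htele := sum_range_sub' (fun k => B (gradDescent b τ x k)) K
  have hstep : ∀ k ∈ range K, τ * (1 - τ / 2) * ‖b (gradDescent b τ x k)‖ ^ 2
      ≤ B (gradDescent b τ x k) - B (gradDescent b τ x (k + 1)) := fun k _ => by
    rw [gradDescent_succ]
    linarith [hB.le_sub_smul (τ := τ) (gradDescent b τ x k)]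
  rw [gradDescent_zero] at htele
  rw [mul_sum]
  exact (sum_le_sum hstep).trans_eq htele

lemma IsSubgradientMap.le_add_mul_sum_sq (hA : IsSubgradientMap A a) (hτ : 0 ≤ τ)
    (hab : ∀ v, ‖a v‖ ≤ ‖b v‖) (x : E) (K : ℕ) :
    A x ≤ A (gradDescent b τ x K) + τ * ∑ k ∈ range K, ‖b (gradDescent b τ x k)‖ ^ 2 := by
  have htele := sum_range_sub' (fun k => A (gradDescent b τ x k)) K
  have hstep : ∀ k ∈ range K, A (gradDescent b τ x k) - A (gradDescent b τ x (k + 1))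
      ≤ τ * ‖b (gradDescent b τ x k)‖ ^ 2 := fun k _ => by
    rw [gradDescent_succ]
    linarith [hA.le_sub_smul hτ (hab (gradDescent b τ x k))]
  rw [gradDescent_zero] at htele
  rw [mul_sum]
  linarith [htele ▸ sum_le_sum hstep]

lemma norm_gradDescent_sub_le (hτ : 0 ≤ τ) (x z : E) (K : ℕ) :
    ‖gradDescent b τ x K - z‖ ≤ ‖x - z‖ + τ * ∑ k ∈ range K, ‖b (gradDescent b τ x k)‖ := by
  induction K with
  | zero => simp
  | succ K ih =>
    rw [gradDescent_succ, sum_range_succ, mul_add, sub_right_comm]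
    calc _ ≤ ‖gradDescent b τ x K - z‖ + ‖τ • b (gradDescent b τ x K)‖ := norm_sub_le _ _
      _ ≤ _ := by rw [norm_smul, Real.norm_of_nonneg hτ]; linarith

lemma IsSubgradientMap.le_add_mul_of_norm_le (hA : IsSubgradientMap A a)
    (hB : IsSmoothGradientMap B b) (hB0 : ∀ v, 0 ≤ B v) (hAinf : ∀ ε > 0, ∃ z, A z ≤ ε)
    (hab : ∀ v, ‖a v‖ ≤ ‖b v‖) (hτ : τ ∈ Set.Ioc 0 1) (x : E) : A x ≤ B x + τ * B x := by
  obtain ⟨hτ0, hτ1⟩ := hτ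
  set X := gradDescent b τ x
  set u := fun k => ‖b (X k)‖
  have hc : 0 < τ * (1 - τ / 2) := by nlinarith
  have hS : ∀ K, τ * (1 - τ / 2) * ∑ k ∈ range K, u k ^ 2 ≤ B x := fun K =>
    (hB.mul_sum_sq_le x K).trans (by linarith [hB0 (X K)])
  have hsum : Summable fun k => u k ^ 2 :=
    summable_of_sum_range_le (fun _ => sq_nonneg _) fun K => (le_div_iff₀' hc).2 (hS K)
  refine le_of_forall_pos_le_add fun ε hε => ?_
  obtain ⟨z, hz⟩ := hAinf (ε / 2) (half_pos hε)
  obtain ⟨k, hk⟩ := exists_mul_add_sum_le hsum ‖x - z‖ (half_pos hε)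
  have hsum_nonneg : 0 ≤ ∑ j ∈ range k, u j := sum_nonneg fun j _ => norm_nonneg _
  have hXk : A (X k) ≤ A z + ε / 2 := by
    have hsub := hA z (X k)
    have hinner : ⟪a (X k), z - X k⟫_ℝ ≥ -(ε / 2) := by
      rw [← neg_sub, inner_neg_right, ge_iff_le, neg_le_neg_iff]
      calc ⟪a (X k), X k - z⟫_ℝ ≤ ‖a (X k)‖ * ‖X k - z‖ := real_inner_le_norm _ _
        _ ≤ u k * (‖x - z‖ + ∑ j ∈ range k, u j) := by
          gcongr
          · exact hab _
          · exact (norm_gradDescent_sub_le hτ0.le x z k).trans (by nlinarith)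
        _ ≤ ε / 2 := hk
    linarith
  have hτS : τ * ∑ j ∈ range k, u j ^ 2 ≤ B x + τ * B x := by
    have hSk := hS k
    have hS0 : 0 ≤ ∑ j ∈ range k, u j ^ 2 := sum_nonneg fun j _ => sq_nonneg _
    -- `1 ≤ (1 + τ) * (1 - τ / 2)` because `τ ≤ 1`
    nlinarith [mul_nonneg (mul_nonneg hτ0.le (sub_nonneg.2 hτ1)) hS0]
  linarith [hA.le_add_mul_sum_sq hτ0.le hab x k]

theorem IsSubgradientMap.le_of_norm_le (hA : IsSubgradientMap A a) (hB : IsSmoothGradientMap B b)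
    (hB0 : ∀ v, 0 ≤ B v) (hAinf : ∀ ε > 0, ∃ z, A z ≤ ε) (hab : ∀ v, ‖a v‖ ≤ ‖b v‖) (x : E) :
    A x ≤ B x :=
  le_of_forall_le_add_mul fun _ hτ => hA.le_add_mul_of_norm_le hB hB0 hAinf hab hτ x

end GradientDescent

section ConvexAnalysis

variable {E : Type*} [NormedAddCommGroup E] [InnerProductSpace ℝ E] {D : Set E} {φ : E → ℝ}

lemma ConvexOn.inner_sub_le_of_isMinOn (hφ : ConvexOn ℝ D φ) {x p u : E} (hp : p ∈ D)
    (hmin : IsMinOn (fun v => φ v + 1 / 2 * ‖x - v‖ ^ 2) D p) (hu : u ∈ D) :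
    ⟪x - p, u - p⟫_ℝ ≤ φ u - φ p := by
  refine le_of_forall_le_add_mul (c := 1 / 2 * ‖u - p‖ ^ 2) fun t ⟨ht0, ht1⟩ => ?_
  have hmem : (1 - t) • p + t • u ∈ D := hφ.1 hp hu (by linarith) ht0.le (by ring)
  have hconv := hφ.2 hp hu (by linarith : 0 ≤ 1 - t) ht0.le (by ring)
  have hle := isMinOn_iff.1 hmin _ hmem
  have hexp : x - ((1 - t) • p + t • u) = (x - p) - t • (u - p) := by module
  rw [hexp, norm_sub_sq_real (x - p), norm_smul, real_inner_smul_right,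
    Real.norm_of_nonneg ht0.le] at hle
  rw [smul_eq_mul, smul_eq_mul] at hconv
  refine le_of_mul_le_mul_left ?_ ht0
  nlinarith

lemma exists_inner_add_mul_lt_of_notMem_epigraph [CompleteSpace E] (hφ : ConvexOn ℝ D φ)
    (hclosed : IsClosed {p : E × ℝ | p.1 ∈ D ∧ φ p.1 ≤ p.2}) {y : E} {μ : ℝ}
    (hyμ : ¬(y ∈ D ∧ φ y ≤ μ)) :
    ∃ (w : E) (s u : ℝ), (∀ z ∈ D, ∀ τ, φ z ≤ τ → ⟪w, z⟫_ℝ + τ * s < u) ∧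
      u < ⟪w, y⟫_ℝ + μ * s := by
  obtain ⟨L, u, hL, hLy⟩ := geometric_hahn_banach_closed_point hφ.convex_epigraph hclosed
    (x := (y, μ)) hyμ
  set w := (InnerProductSpace.toDual ℝ E).symm (L.comp (.inl ℝ E ℝ))
  have hLw : ∀ z τ, L (z, τ) = ⟪w, z⟫_ℝ + τ * L (0, 1) := fun z τ => by
    have hdecomp : ((z, τ) : E × ℝ) = (z, 0) + τ • ((0 : E), (1 : ℝ)) := by ext <;> simp
    rw [hdecomp, map_add, map_smul, smul_eq_mul, InnerProductSpace.toDual_symm_apply]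
    rfl
  refine ⟨w, L (0, 1), u, fun z hz τ hτ => ?_, by rwa [← hLw]⟩
  rw [← hLw]
  exact hL _ ⟨hz, hτ⟩

lemma affine_le_of_separation {w : E} {s u : ℝ} (hs : s < 0)
    (hsep : ∀ z ∈ D, ⟪w, z⟫_ℝ + φ z * s < u) {y : E} {μ : ℝ} (hy : u < ⟪w, y⟫_ℝ + μ * s) :
    μ ≤ ⟪(-s)⁻¹ • w, y⟫_ℝ + u / s ∧ ∀ z ∈ D, ⟪(-s)⁻¹ • w, z⟫_ℝ + u / s ≤ φ z := by
  have haff : ∀ v, ⟪(-s)⁻¹ • w, v⟫_ℝ + u / s = (u - ⟪w, v⟫_ℝ) / s := fun v => by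
    rw [real_inner_smul_left]
    field_simp
    ring
  refine ⟨?_, fun z hz => ?_⟩
  · rw [haff, le_div_iff_of_neg hs]
    linarith
  · rw [haff, div_le_iff_of_neg hs]
    linarith [hsep z hz]

lemma ConvexOn.exists_affine_le_of_notMem_epigraph [CompleteSpace E] (hφ : ConvexOn ℝ D φ)
    (hclosed : IsClosed {p : E × ℝ | p.1 ∈ D ∧ φ p.1 ≤ p.2}) (hD : D.Nonempty) {y : E} {μ : ℝ}
    (hyμ : ¬(y ∈ D ∧ φ y ≤ μ)) :
    ∃ (w : E) (β : ℝ), μ ≤ ⟪w, y⟫_ℝ + β ∧ ∀ z ∈ D, ⟪w, z⟫_ℝ + β ≤ φ z := by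
  obtain ⟨x₁, hx₁⟩ := hD
  obtain ⟨w₁, s₁, u₁, hsep₁, hx₁u⟩ :=
    exists_inner_add_mul_lt_of_notMem_epigraph hφ hclosed (y := x₁) (μ := φ x₁ - 1)
      (fun h => by linarith [h.2])
  have hs₁ : s₁ < 0 := by linarith [hsep₁ x₁ hx₁ _ le_rfl]
  obtain ⟨w₀, β₀, hbase⟩ : ∃ (w₀ : E) (β₀ : ℝ), ∀ z ∈ D, ⟪w₀, z⟫_ℝ + β₀ ≤ φ z :=
    ⟨_, _, (affine_le_of_separation hs₁ (fun z hz => hsep₁ z hz _ le_rfl) hx₁u).2⟩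
  obtain ⟨w, s, u, hsep, hyu⟩ := exists_inner_add_mul_lt_of_notMem_epigraph hφ hclosed hyμ
  -- the epigraph is unbounded above, so a separating hyperplane cannot slope upwards
  have hs : s ≤ 0 := by
    by_contra! hs
    have := hsep x₁ hx₁ (max (φ x₁) ((u - ⟪w, x₁⟫_ℝ) / s)) (le_max_left _ _)
    have := (div_le_iff₀ hs).1 (le_max_right (φ x₁) ((u - ⟪w, x₁⟫_ℝ) / s))
    linarith
  rcases hs.lt_or_eq with hs | rfl
  · exact ⟨_, _, affine_le_of_separation hs (fun z hz => hsep z hz _ le_rfl) hyu⟩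
  -- a vertical hyperplane: tilt the base minorant `w₀, β₀` along it until it reaches `μ` at `y`
  simp only [mul_zero, add_zero] at hsep hyu
  set κ := max 0 ((μ - ⟪w₀, y⟫_ℝ - β₀) / (⟪w, y⟫_ℝ - u))
  have hκ0 : 0 ≤ κ := le_max_left _ _
  have hκ : μ - ⟪w₀, y⟫_ℝ - β₀ ≤ κ * (⟪w, y⟫_ℝ - u) :=
    (div_le_iff₀ (by linarith)).1 (le_max_right _ _)
  refine ⟨w₀ + κ • w, β₀ - κ * u, ?_, fun z hz => ?_⟩
  · rw [inner_add_left, real_inner_smul_left]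
    linarith
  · rw [inner_add_left, real_inner_smul_left]
    nlinarith [hbase z hz, hsep z hz (φ z) le_rfl]

end ConvexAnalysis

section MoreauEnvelope

variable {E : Type*} [NormedAddCommGroup E]

def IsProxMapOn (D : Set E) (φ : E → ℝ) (P : E → E) : Prop :=
  ∀ x, P x ∈ D ∧ IsMinOn (fun v => φ v + 1 / 2 * ‖x - v‖ ^ 2) D (P x)

def moreauEnv (φ : E → ℝ) (P : E → E) (x : E) : ℝ :=
  φ (P x) + 1 / 2 * ‖x - P x‖ ^ 2

/-- `½‖x‖² - moreauEnv φ P x` is convex with gradient `P x`; this shifts it so that the gradient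
becomes `P x - x₀` and the infimum `0`. -/
def moreauGap (φ : E → ℝ) (P : E → E) (x₀ x : E) : ℝ :=
  1 / 2 * ‖x - x₀‖ ^ 2 + φ x₀ - moreauEnv φ P x

variable {D D' : Set E} {φ ψ : E → ℝ} {P Q : E → E} {x₀ : E}

lemma IsProxMapOn.moreauEnv_le (hP : IsProxMapOn D φ P) (x : E) {u : E} (hu : u ∈ D) :
    moreauEnv φ P x ≤ φ u + 1 / 2 * ‖x - u‖ ^ 2 :=
  isMinOn_iff.1 (hP x).2 u hu

lemma IsProxMapOn.moreauGap_nonneg (hP : IsProxMapOn D φ P) (hx₀ : x₀ ∈ D) (x : E) :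
    0 ≤ moreauGap φ P x₀ x := by
  have := hP.moreauEnv_le x hx₀
  unfold moreauGap
  linarith

variable [InnerProductSpace ℝ E]

lemma IsProxMapOn.isSubgradientMap_moreauGap (hP : IsProxMapOn D φ P) :
    IsSubgradientMap (moreauGap φ P x₀) fun x => P x - x₀ := by
  intro v w
  have h := hP.moreauEnv_le v (hP w).1
  have hid : 1 / 2 * ‖w - x₀‖ ^ 2 - 1 / 2 * ‖w - P w‖ ^ 2 + ⟪P w - x₀, v - w⟫_ℝ
      = 1 / 2 * ‖v - x₀‖ ^ 2 - 1 / 2 * ‖v - P w‖ ^ 2 := by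
    simp only [norm_sub_sq_real, inner_sub_left, inner_sub_right, real_inner_comm w (P w),
      real_inner_comm v (P w), real_inner_comm w x₀, real_inner_comm v x₀]
    ring
  simp only [moreauGap, moreauEnv] at h ⊢
  linarith

lemma IsProxMapOn.isSmoothGradientMap_moreauGap (hP : IsProxMapOn D φ P)
    (hφ : ConvexOn ℝ D φ) : IsSmoothGradientMap (moreauGap φ P x₀) fun x => P x - x₀ := by
  intro v w
  have hsub := hφ.inner_sub_le_of_isMinOn (hP w).1 (hP w).2 (hP v).1
  have hid : 1 / 2 * ‖w - x₀‖ ^ 2 - 1 / 2 * ‖w - P w‖ ^ 2 + ⟪P w - x₀, v - w⟫_ℝ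
        + 1 / 2 * ‖v - w‖ ^ 2 - (1 / 2 * ‖v - x₀‖ ^ 2 - 1 / 2 * ‖v - P v‖ ^ 2)
        + ⟪w - P w, P v - P w⟫_ℝ
      = 1 / 2 * ‖(v - P v) - (w - P w)‖ ^ 2 := by
    simp only [norm_sub_sq_real, inner_sub_left, inner_sub_right, real_inner_self_eq_norm_sq,
      real_inner_comm w (P w), real_inner_comm v (P w), real_inner_comm w x₀,
      real_inner_comm v x₀, real_inner_comm (P v) (P w), real_inner_comm w (P v)]
    ring
  simp only [moreauGap, moreauEnv]
  nlinarith [sq_nonneg ‖(v - P v) - (w - P w)‖]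

lemma IsProxMapOn.le_moreauEnv_add (hP : IsProxMapOn D φ P) {w : E} {β : ℝ}
    (hmin : ∀ z ∈ D, ⟪w, z⟫_ℝ + β ≤ φ z) (y : E) :
    ⟪w, y⟫_ℝ + β + 1 / 2 * ‖w‖ ^ 2 ≤ moreauEnv φ P (y + w) := by
  set p := P (y + w)
  have hp := hmin p (hP _).1
  have hid : ⟪w, p⟫_ℝ + 1 / 2 * ‖y + w - p‖ ^ 2
      = ⟪w, y⟫_ℝ + 1 / 2 * ‖w‖ ^ 2 + 1 / 2 * ‖y - p‖ ^ 2 := by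
    rw [show y + w - p = w + (y - p) by abel, norm_add_sq_real, inner_sub_right]
    ring
  unfold moreauEnv
  nlinarith [sq_nonneg ‖y - p‖]

lemma IsProxMapOn.exists_moreauGap_le [CompleteSpace E] (hP : IsProxMapOn D φ P)
    (hφ : ConvexOn ℝ D φ) (hclosed : IsClosed {p : E × ℝ | p.1 ∈ D ∧ φ p.1 ≤ p.2})
    (hx₀ : x₀ ∈ D) {ε : ℝ} (hε : 0 < ε) : ∃ z, moreauGap φ P x₀ z ≤ ε := by
  obtain ⟨w, β, hlev, hmin⟩ := hφ.exists_affine_le_of_notMem_epigraph hclosed ⟨x₀, hx₀⟩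
    (y := x₀) (μ := φ x₀ - ε) fun h => by linarith [h.2]
  refine ⟨x₀ + w, ?_⟩
  have := hP.le_moreauEnv_add hmin x₀
  rw [moreauGap, add_sub_cancel_left]
  linarith

lemma IsProxMapOn.le_sub_add_of_moreauGap_le (hP : IsProxMapOn D φ P)
    (hQ : IsProxMapOn D' ψ Q) (hgap : ∀ x, moreauGap φ P x₀ x ≤ moreauGap ψ Q x₀ x) {y : E}
    (hy : y ∈ D) {w : E} {β : ℝ} (hmin : ∀ z ∈ D', ⟪w, z⟫_ℝ + β ≤ ψ z) :
    ⟪w, y⟫_ℝ + β ≤ φ y - φ x₀ + ψ x₀ := by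
  have hcomp := hgap (y + w)
  have hφy := hP.moreauEnv_le (y + w) hy
  rw [add_sub_cancel_left] at hφy
  unfold moreauGap at hcomp
  linarith [hQ.le_moreauEnv_add hmin y]

theorem ConvexOn.sub_le_sub_of_norm_prox_sub_le [CompleteSpace E] (hφ : ConvexOn ℝ D φ)
    (hψ : ConvexOn ℝ D' ψ) (hφc : IsClosed {p : E × ℝ | p.1 ∈ D ∧ φ p.1 ≤ p.2})
    (hψc : IsClosed {p : E × ℝ | p.1 ∈ D' ∧ ψ p.1 ≤ p.2}) (hP : IsProxMapOn D φ P)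
    (hQ : IsProxMapOn D' ψ Q) (hx₀ : x₀ ∈ D) (hx₀' : x₀ ∈ D')
    (h : ∀ x, ‖P x - x₀‖ ≤ ‖Q x - x₀‖) {y : E} (hy : y ∈ D) :
    y ∈ D' ∧ ψ y - ψ x₀ ≤ φ y - φ x₀ := by
  have hgap : ∀ x, moreauGap φ P x₀ x ≤ moreauGap ψ Q x₀ x :=
    hP.isSubgradientMap_moreauGap.le_of_norm_le (hQ.isSmoothGradientMap_moreauGap hψ)
      (hQ.moreauGap_nonneg hx₀') (fun _ hε => hP.exists_moreauGap_le hφ hφc hx₀ hε) h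
  have hepi : ∀ μ, φ y - φ x₀ + ψ x₀ < μ → y ∈ D' ∧ ψ y ≤ μ := fun μ hμ => by
    by_contra hyμ
    obtain ⟨w, β, hlev, hmin⟩ := hψ.exists_affine_le_of_notMem_epigraph hψc ⟨x₀, hx₀'⟩ hyμ
    linarith [hP.le_sub_add_of_moreauGap_le hQ hgap hy hmin]
  refine ⟨(hepi _ (lt_add_one _)).1, ?_⟩
  linarith [le_of_forall_gt_imp_ge_of_dense fun μ hμ => (hepi μ hμ).2]

end MoreauEnvelope

lemma EReal.le_coe_iff_of_ne_bot {x : EReal} (hx : x ≠ ⊥) {r : ℝ} :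
    x ≤ r ↔ x ≠ ⊤ ∧ x.toReal ≤ r := by
  induction x <;> simp_all

lemma LowerSemicontinuous.isClosed_toReal_epigraph {E : Type*} [TopologicalSpace E]
    {f : E → EReal} (hf : LowerSemicontinuous f) (hbot : ∀ z, f z ≠ ⊥) :
    IsClosed {p : E × ℝ | p.1 ∈ {z | f z ≠ ⊤} ∧ (f p.1).toReal ≤ p.2} := by
  have hset : {p : E × ℝ | p.1 ∈ {z | f z ≠ ⊤} ∧ (f p.1).toReal ≤ p.2}
      = Prod.map id ((↑) : ℝ → EReal) ⁻¹' {p | f p.1 ≤ p.2} := by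
    ext p
    exact (EReal.le_coe_iff_of_ne_bot (hbot p.1)).symm
  rw [hset]
  exact hf.isClosed_epigraph.preimage (continuous_id.prodMap continuous_coe_real_ereal)

section ExtendedRealValued

variable {E : Type*} [NormedAddCommGroup E] {f : E → EReal}

lemma isProxMapOn_toReal {P : E → E} (hP : ∀ x, IsProx f x (P x)) (hbot : ∀ z, f z ≠ ⊥)
    {u : E} (hu : f u ≠ ⊤) : IsProxMapOn {z | f z ≠ ⊤} (fun z => (f z).toReal) P := by
  intro x
  have hle : ∀ v, f v ≠ ⊤ → f (P x) + ((1 / 2 * ‖x - P x‖ ^ 2 : ℝ) : EReal)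
      ≤ (((f v).toReal + 1 / 2 * ‖x - v‖ ^ 2 : ℝ) : EReal) := fun v hv => by
    rw [EReal.coe_add, EReal.coe_toReal hv (hbot v)]
    exact hP x v
  have hPx : f (P x) ≠ ⊤ := fun htop => by
    have := hle u hu
    rw [htop, EReal.top_add_coe, top_le_iff] at this
    exact EReal.coe_ne_top _ this
  refine ⟨hPx, isMinOn_iff.2 fun v hv => ?_⟩
  have := hle v hv
  rwa [← EReal.coe_toReal hPx (hbot _), ← EReal.coe_add, EReal.coe_le_coe_iff] at this

lemma ERealConvexOn.convexOn_toReal [InnerProductSpace ℝ E] (hf : ERealConvexOn f)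
    (hbot : ∀ z, f z ≠ ⊥) : ConvexOn ℝ {z | f z ≠ ⊤} fun z => (f z).toReal := by
  have key : ∀ x ∈ {z | f z ≠ ⊤}, ∀ y ∈ {z | f z ≠ ⊤}, ∀ a b : ℝ, 0 ≤ a → 0 ≤ b → a + b = 1 →
      f (a • x + b • y) ≠ ⊤ ∧
        (f (a • x + b • y)).toReal ≤ a * (f x).toReal + b * (f y).toReal := by
    intro x hx y hy a b ha hb hab
    have h := hf x y a b ha hb hab
    rw [← EReal.coe_toReal hx (hbot x), ← EReal.coe_toReal hy (hbot y), ← EReal.coe_mul,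
      ← EReal.coe_mul, ← EReal.coe_add] at h
    exact (EReal.le_coe_iff_of_ne_bot (hbot _)).1 h
  exact ⟨fun x hx y hy a b ha hb hab => (key x hx y hy a b ha hb hab).1,
    fun x hx y hy a b ha hb hab => (key x hx y hy a b ha hb hab).2⟩

end ExtendedRealValued

/-- **Comparison principle for convex functions through proximal mappings.** -/
theorem comparison_of_prox_norm_le
    (f g : H → EReal) (hf : Gamma0 f) (hg : Gamma0 g)
    (x₀ : H) (hx₀f : f x₀ ≠ ⊤) (hx₀g : g x₀ ≠ ⊤)
    (proxf proxg : H → H)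
    (hproxf : ∀ x, IsProx f x (proxf x)) (hproxg : ∀ x, IsProx g x (proxg x))
    (h : ∀ x, ‖proxf x - x₀‖ ≤ ‖proxg x - x₀‖) :
    ∀ x, g x - g x₀ ≤ f x - f x₀ := by
  obtain ⟨-, hfbot, hfconv, hflsc⟩ := hf
  obtain ⟨-, hgbot, hgconv, hglsc⟩ := hg
  intro y
  by_cases hfy : f y = ⊤
  · rw [hfy, ← EReal.coe_toReal hx₀f (hfbot x₀), EReal.top_sub_coe]
    exact le_top
  obtain ⟨hgy, hle⟩ := (hfconv.convexOn_toReal hfbot).sub_le_sub_of_norm_prox_sub_le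
    (hgconv.convexOn_toReal hgbot) (hflsc.isClosed_toReal_epigraph hfbot)
    (hglsc.isClosed_toReal_epigraph hgbot) (isProxMapOn_toReal hproxf hfbot hx₀f)
    (isProxMapOn_toReal hproxg hgbot hx₀g) hx₀f hx₀g h hfy
  rw [← EReal.coe_toReal hgy (hgbot y), ← EReal.coe_toReal hx₀g (hgbot x₀),
    ← EReal.coe_toReal hfy (hfbot y), ← EReal.coe_toReal hx₀f (hfbot x₀)]
  exact_mod_cast hle
end
end

section
/- Let H be a real Hilbert space, let ℓ ≥ 0, and let g ∈ Γ0(H) be such that its Fenchel conjugate g* is bounded from below. If ‖x‖ − ℓ ≤ ‖prox_g(x)‖ for all x ∈ H, then g(x) − g(0) ≤ ℓ‖x‖ for all x ∈ H. -/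
open scoped InnerProductSpace
noncomputable section

variable {H : Type*} [NormedAddCommGroup H] [InnerProductSpace ℝ H] [CompleteSpace H]

/-!
Fix `x ≠ 0`, put `u = x / ‖x‖` and let `p = prox_g (s • u)` with `s → ∞`. The prox point
satisfies `g p + ⟪s • u - p, y - p⟫ ≤ g y`; at `y = 0`, together with `s - ℓ ≤ ‖p‖`, this gives
`g p ≤ g 0 + ℓ‖p‖`, and convexity on the segment `[0, p]` carries the bound to
`w = (‖x‖ / ‖p‖) • p`. The same inequality, combined with the minorant `a - b‖y‖ ≤ g y` obtained from
`prox_g 0`, shows `⟪p / ‖p‖, u⟫ ≥ 1 - O(1/s)`, so `w → x`, and lower semicontinuity of `g` gives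
`g x ≤ g 0 + ℓ‖x‖`.
-/

open Filter Topology

section

variable {E : Type*} [NormedAddCommGroup E] {f : E → EReal}

lemma IsProx.ne_top (hf : ∃ y, f y ≠ ⊤) {z p : E} (hp : IsProx f z p) : f p ≠ ⊤ := by
  obtain ⟨y, hy⟩ := hf
  intro htop
  have hle := hp y
  rw [htop, EReal.top_add_coe, top_le_iff] at hle
  exact EReal.add_ne_top hy (EReal.coe_ne_top _) hle

variable [InnerProductSpace ℝ E]

lemma Gamma0.exists_eq_coe (hf : Gamma0 f) {x : E} (hx : f x ≠ ⊤) : ∃ a : ℝ, f x = a :=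
  ⟨_, (EReal.coe_toReal hx (hf.2.1 x)).symm⟩

lemma norm_sub_smul_sq_real (a b : E) (t : ℝ) :
    ‖a - t • b‖ ^ 2 = ‖a‖ ^ 2 - 2 * t * ⟪a, b⟫_ℝ + t ^ 2 * ‖b‖ ^ 2 := by
  rw [norm_sub_sq_real, real_inner_smul_right, norm_smul, mul_pow, Real.norm_eq_abs, sq_abs]
  ring

lemma ERealConvexOn.le_segment (hf : ERealConvexOn f) (p y : E) {t : ℝ} (ht0 : 0 ≤ t)
    (ht1 : t ≤ 1) : f (p + t • (y - p)) ≤ ((1 - t : ℝ) : EReal) * f p + (t : EReal) * f y := by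
  convert hf p y (1 - t) t (by linarith) ht0 (by ring) using 2
  module

/-- `z - p ∈ ∂f(p)`. -/
lemma IsProx.add_inner_le (hf : Gamma0 f) {z p : E} (hp : IsProx f z p) (y : E) :
    f p + (⟪z - p, y - p⟫_ℝ : EReal) ≤ f y := by
  rcases eq_or_ne (f y) ⊤ with hy | hy
  · simp [hy]
  obtain ⟨A, hA⟩ := hf.exists_eq_coe (hp.ne_top hf.1)
  obtain ⟨B, hB⟩ := hf.exists_eq_coe hy
  rw [hA, hB, ← EReal.coe_add, EReal.coe_le_coe_iff]
  have hsegment : ∀ t : ℝ, 0 < t → t ≤ 1 →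
      A + ⟪z - p, y - p⟫_ℝ ≤ B + t / 2 * ‖y - p‖ ^ 2 := by
    intro t ht0 ht1
    have hconv := hf.2.2.1.le_segment p y ht0.le ht1
    have hmin := hp (p + t • (y - p))
    rw [hA, hB, ← EReal.coe_mul, ← EReal.coe_mul, ← EReal.coe_add] at hconv
    rw [hA] at hmin
    have hreal := hmin.trans (add_le_add_left hconv _)
    rw [← EReal.coe_add, ← EReal.coe_add, EReal.coe_le_coe_iff, sub_add_eq_sub_sub,
      norm_sub_smul_sq_real] at hreal
    nlinarith
  have hlim : Tendsto (fun t : ℝ => B + t / 2 * ‖y - p‖ ^ 2) (𝓝[>] 0) (𝓝 B) := by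
    refine tendsto_nhdsWithin_of_tendsto_nhds (Continuous.tendsto' ?_ _ _ (by simp))
    fun_prop
  refine ge_of_tendsto hlim ?_
  filter_upwards [Ioo_mem_nhdsGT one_pos] with t ht
  exact hsegment t ht.1 ht.2.le

lemma IsProx.add_sq_norm_sub_inner_le (hf : Gamma0 f) {z p : E} (hp : IsProx f z p) :
    f p + ((‖p‖ ^ 2 - ⟪z, p⟫_ℝ : ℝ) : EReal) ≤ f 0 := by
  convert hp.add_inner_le hf 0 using 3
  rw [zero_sub, inner_neg_right, inner_sub_left, real_inner_self_eq_norm_sq]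
  ring

lemma IsProx.le_add_mul_norm (hf : Gamma0 f) {z p : E} (hp : IsProx f z p) {ℓ : ℝ}
    (hzp : ‖z‖ - ℓ ≤ ‖p‖) : f p ≤ f 0 + ((ℓ * ‖p‖ : ℝ) : EReal) := by
  have hinner : -(ℓ * ‖p‖) ≤ ‖p‖ ^ 2 - ⟪z, p⟫_ℝ := by
    nlinarith [real_inner_le_norm z p, norm_nonneg p]
  have hle := (add_le_add_right (EReal.coe_le_coe_iff.2 hinner) (f p)).trans
    (hp.add_sq_norm_sub_inner_le hf)
  rwa [EReal.coe_neg, ← sub_eq_add_neg,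
    EReal.sub_le_iff_le_add (.inl (EReal.coe_ne_bot _)) (.inl (EReal.coe_ne_top _))] at hle

lemma IsProx.exists_sub_mul_norm_le (hf : Gamma0 f) {z p : E} (hp : IsProx f z p) :
    ∃ a b : ℝ, ∀ y, ((a - b * ‖y‖ : ℝ) : EReal) ≤ f y := by
  obtain ⟨A, hA⟩ := hf.exists_eq_coe (hp.ne_top hf.1)
  refine ⟨A - ⟪z - p, p⟫_ℝ, ‖z - p‖, fun y => le_trans ?_ (hp.add_inner_le hf y)⟩
  rw [hA, ← EReal.coe_add, EReal.coe_le_coe_iff, inner_sub_right]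
  linarith [neg_le_of_abs_le (abs_real_inner_le_norm (z - p) y)]

lemma ERealConvexOn.le_add_mul_of_norm_le (hf : ERealConvexOn f) {r ℓ t : ℝ} (h0 : f 0 = r)
    {p : E} (hp : f p ≤ ((r + ℓ * ‖p‖ : ℝ) : EReal)) (ht : 0 < t) (htp : t ≤ ‖p‖) :
    f ((t / ‖p‖) • p) ≤ ((r + ℓ * t : ℝ) : EReal) := by
  have hpos : 0 < ‖p‖ := ht.trans_le htp
  have hθ0 : 0 ≤ t / ‖p‖ := by positivity
  have hθ1 : t / ‖p‖ ≤ 1 := (div_le_one hpos).2 htp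
  have hconv := hf.le_segment p 0 (t := 1 - t / ‖p‖) (by linarith) (by linarith)
  rw [show p + (1 - t / ‖p‖) • (0 - p) = (t / ‖p‖) • p by module, h0, sub_sub_cancel] at hconv
  refine hconv.trans ((add_le_add_left (mul_le_mul_of_nonneg_left hp
    (EReal.coe_nonneg.2 hθ0)) _).trans (le_of_eq ?_))
  rw [← EReal.coe_mul, ← EReal.coe_mul, ← EReal.coe_add, EReal.coe_eq_coe_iff]
  field_simp
  ring

lemma tendsto_of_tendsto_inner_of_norm_eq_one {ι : Type*} {l : Filter ι} {v : ι → E} {u : E}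
    (hv : ∀ᶠ i in l, ‖v i‖ = 1) (hu : ‖u‖ = 1)
    (h : Tendsto (fun i => ⟪v i, u⟫_ℝ) l (𝓝 1)) : Tendsto v l (𝓝 u) := by
  rw [tendsto_iff_norm_sub_tendsto_zero]
  have hsq : ∀ᶠ i in l, ‖v i - u‖ = √(2 - 2 * ⟪v i, u⟫_ℝ) := by
    filter_upwards [hv] with i hi
    rw [← Real.sqrt_sq (norm_nonneg (v i - u)), norm_sub_sq_real, hi, hu]
    ring_nf
  have hlim : Tendsto (fun i => √(2 - 2 * ⟪v i, u⟫_ℝ)) l (𝓝 0) := by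
    simpa using ((tendsto_const_nhds.sub (h.const_mul 2)).sqrt : Tendsto _ l (𝓝 √(2 - 2 * 1)))
  exact hlim.congr' (hsq.mono fun i hi => hi.symm)

lemma one_sub_div_le_inv_mul {s n ℓ b c q : ℝ} (hs : 0 < s) (hn : 1 ≤ n) (hsn : s - ℓ ≤ n)
    (h : n ^ 2 - b * n + c ≤ s * q) : 1 - (ℓ + b + |c|) / s ≤ n⁻¹ * q := by
  have hc : -(|c| * n) ≤ c := by nlinarith [neg_abs_le c, abs_nonneg c]
  rw [← div_eq_inv_mul, le_div_iff₀ (by linarith), one_sub_div hs.ne', div_mul_eq_mul_div,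
    div_le_iff₀ hs]
  nlinarith [mul_le_mul_of_nonneg_left hsn (by linarith : (0:ℝ) ≤ n)]

variable {prox : E → E} {ℓ r : ℝ}

lemma tendsto_inv_norm_prox_smul (hf : Gamma0 f) (hprox : ∀ x, IsProx f x (prox x))
    (h : ∀ x, ‖x‖ - ℓ ≤ ‖prox x‖) (h0 : f 0 = r) {u : E} (hu : ‖u‖ = 1) :
    Tendsto (fun s : ℝ => ‖prox (s • u)‖⁻¹ • prox (s • u)) atTop (𝓝 u) := by
  obtain ⟨a, b, hab⟩ := (hprox 0).exists_sub_mul_norm_le hf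
  have hlarge : ∀ᶠ s : ℝ in atTop, 0 < s ∧ 1 ≤ ‖prox (s • u)‖ ∧ s - ℓ ≤ ‖prox (s • u)‖ := by
    filter_upwards [eventually_gt_atTop 0, eventually_ge_atTop (ℓ + 1)] with s hs hsℓ
    have hsu := h (s • u)
    rw [norm_smul, hu, mul_one, Real.norm_of_nonneg hs.le] at hsu
    exact ⟨hs, by linarith, hsu⟩
  refine tendsto_of_tendsto_inner_of_norm_eq_one
    (hlarge.mono fun s hs => norm_smul_inv_norm (norm_pos_iff.1 (by linarith [hs.2.1]))) hu ?_
  have hlower : ∀ᶠ s : ℝ in atTop,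
      1 - (ℓ + b + |a - r|) / s ≤ ⟪‖prox (s • u)‖⁻¹ • prox (s • u), u⟫_ℝ := by
    filter_upwards [hlarge] with s ⟨hs, hn1, hsn⟩
    have hsq := (hprox (s • u)).add_sq_norm_sub_inner_le hf
    rw [h0] at hsq
    have hab' := (add_le_add_left (hab (prox (s • u))) _).trans hsq
    rw [← EReal.coe_add, EReal.coe_le_coe_iff, real_inner_smul_left] at hab'
    rw [real_inner_smul_left, real_inner_comm]
    exact one_sub_div_le_inv_mul hs hn1 hsn (by linarith)
  have hupper : ∀ s : ℝ, ⟪‖prox (s • u)‖⁻¹ • prox (s • u), u⟫_ℝ ≤ 1 := fun s =>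
    (real_inner_le_norm _ _).trans (by
      rw [hu, mul_one, norm_smul, norm_inv, norm_norm]
      exact inv_mul_le_one_of_le₀ le_rfl (norm_nonneg _))
  refine tendsto_of_tendsto_of_tendsto_of_le_of_le' ?_ tendsto_const_nhds hlower
    (Eventually.of_forall hupper)
  simpa using tendsto_const_nhds.sub (tendsto_const_nhds.div_atTop (tendsto_id (α := ℝ)))

theorem Gamma0.le_add_mul_norm_of_norm_sub_le_prox_norm (hf : Gamma0 f)
    (hprox : ∀ x, IsProx f x (prox x)) (h : ∀ x, ‖x‖ - ℓ ≤ ‖prox x‖) (h0 : f 0 = r) (x : E) :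
    f x ≤ ((r + ℓ * ‖x‖ : ℝ) : EReal) := by
  rcases eq_or_ne x 0 with rfl | hx
  · simp [h0]
  set u : E := ‖x‖⁻¹ • x
  have hu : ‖u‖ = 1 := norm_smul_inv_norm hx
  have hw : Tendsto (fun s : ℝ => (‖x‖ / ‖prox (s • u)‖) • prox (s • u)) atTop (𝓝 x) := by
    have hlim := (tendsto_inv_norm_prox_smul hf hprox h h0 hu).const_smul ‖x‖
    rw [smul_inv_smul₀ (norm_ne_zero_iff.2 hx)] at hlim
    simpa only [smul_smul, div_eq_mul_inv] using hlim
  have hle : ∀ᶠ s : ℝ in atTop,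
      f ((‖x‖ / ‖prox (s • u)‖) • prox (s • u)) ≤ ((r + ℓ * ‖x‖ : ℝ) : EReal) := by
    filter_upwards [eventually_ge_atTop 0, eventually_ge_atTop (‖x‖ + ℓ)] with s hs0 hs
    have hsu := h (s • u)
    rw [norm_smul, hu, mul_one, Real.norm_of_nonneg hs0] at hsu
    have hp := (hprox (s • u)).le_add_mul_norm hf (h _)
    rw [h0, ← EReal.coe_add] at hp
    exact hf.2.2.1.le_add_mul_of_norm_le h0 hp (norm_pos_iff.2 hx) (by linarith)
  exact (hf.2.2.2.isClosed_preimage _).mem_of_tendsto hw hle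

end

theorem le_mul_norm_of_norm_sub_le_prox_norm_general
    (ℓ : ℝ) (g : H → EReal) (hg : Gamma0 g)
    (proxg : H → H) (hproxg : ∀ x, IsProx g x (proxg x))
    (h : ∀ x, ‖x‖ - ℓ ≤ ‖proxg x‖) :
    ∀ x, g x - g 0 ≤ ((ℓ * ‖x‖ : ℝ) : EReal) := by
  intro x
  rcases eq_or_ne (g 0) ⊤ with h0 | h0
  · -- in `EReal`, `a - ⊤ = ⊥` for every `a`
    simp [h0]
  obtain ⟨r, hr⟩ := hg.exists_eq_coe h0
  rw [hr, EReal.sub_le_iff_le_add (.inl (EReal.coe_ne_bot r)) (.inl (EReal.coe_ne_top r)),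
    ← EReal.coe_add, add_comm]
  exact hg.le_add_mul_norm_of_norm_sub_le_prox_norm hproxg h hr x

/-- If `g* ` is bounded below and `‖x‖ - ℓ ≤ ‖prox_g x‖` for all `x`,
then `g - g 0 ≤ ℓ‖·‖`. -/
theorem le_mul_norm_of_norm_sub_le_prox_norm
    (ℓ : ℝ) (hℓ : 0 ≤ ℓ) (g : H → EReal) (hg : Gamma0 g)
    (hconj : ∃ c : ℝ, ∀ x, (c : EReal) ≤ fenchel g x)
    (proxg : H → H) (hproxg : ∀ x, IsProx g x (proxg x))
    (h : ∀ x, ‖x‖ - ℓ ≤ ‖proxg x‖) :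
    ∀ x, g x - g 0 ≤ ((ℓ * ‖x‖ : ℝ) : EReal) :=
  le_mul_norm_of_norm_sub_le_prox_norm_general ℓ g hg proxg hproxg h
end
end

section
/- Let H be a real Hilbert space and let g ∈ Γ0(H) be such that its Fenchel conjugate g* is bounded from below. If ‖x‖ ≤ ‖prox_g(x)‖ for all x ∈ H, then g is constant. -/
open scoped InnerProductSpace
noncomputable section

variable {H : Type*} [NormedAddCommGroup H] [InnerProductSpace ℝ H] [CompleteSpace H]

/-!
The proximal point `p` of `x` satisfies the subgradient inequality `g v ≥ g p + ⟪x - p, v - p⟫`,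
hence `g* (x - p) ≤ ⟪x - p, p⟫ - g p`. Together with `g* ≥ c` and `‖x‖ ≤ ‖p‖` this bounds the
Moreau envelope `e x = g p + ½‖x - p‖²` above by `-c`. The Moreau envelope is convex, and a convex
function bounded above on the whole space is constant. Finally `e p ≤ g p = e x - ½‖x - p‖²`
forces `p = x`, so `g = e` is constant.
-/

open Filter Topology Set

theorem le_of_forall_mem_Ioc_le_add_mul {a b M : ℝ} (h : ∀ t ∈ Ioc (0 : ℝ) 1, a ≤ b + t * M) :
    a ≤ b := by
  have hlim : Tendsto (fun t : ℝ => b + t * M) (𝓝[>] 0) (𝓝 b) := by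
    have : Continuous fun t : ℝ => b + t * M := by fun_prop
    simpa using (this.tendsto 0).mono_left nhdsWithin_le_nhds
  refine ge_of_tendsto hlim ?_
  filter_upwards [Ioc_mem_nhdsGT one_pos] with t ht using h t ht

theorem ConvexOn.eq_of_bddAbove {E : Type*} [AddCommGroup E] [Module ℝ E] {f : E → ℝ}
    (hf : ConvexOn ℝ univ f) (hbdd : BddAbove (range f)) (x y : E) : f x = f y := by
  obtain ⟨M, hM⟩ := hbdd
  have key : ∀ x y, f y ≤ f x := by
    intro x y
    refine le_of_forall_mem_Ioc_le_add_mul (M := M - f x) fun t ⟨ht0, ht1⟩ => ?_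
    set z := x + t⁻¹ • (y - x)
    have hy : (1 - t) • x + t • z = y := by
      rw [smul_add, smul_smul, mul_inv_cancel₀ ht0.ne', one_smul]; module
    have hconv := hf.2 (mem_univ x) (mem_univ z) (sub_nonneg.2 ht1) ht0.le (sub_add_cancel 1 t)
    rw [smul_eq_mul, smul_eq_mul, hy] at hconv
    have hz := hM (mem_range_self z)
    nlinarith
  exact le_antisymm (key y x) (key x y)

namespace IsProx

variable {E : Type*} [NormedAddCommGroup E] {f : E → EReal} {x p : E}

theorem ne_top_s4 (hp : IsProx f x p) (hf : ∃ y, f y ≠ ⊤) : f p ≠ ⊤ := by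
  obtain ⟨y, hy⟩ := hf
  have hle : f p ≤ f y + (((1 : ℝ) / 2 * ‖x - y‖ ^ 2 : ℝ) : EReal) :=
    (le_add_of_nonneg_right (EReal.coe_nonneg.2 (by positivity))).trans (hp y)
  exact ne_top_of_le_ne_top (EReal.add_lt_top hy (EReal.coe_ne_top _)).ne hle

theorem add_half_sq_le {y : E} {A B : ℝ} (hp : IsProx f x p) (hA : f p = A) (hB : f y ≤ B) :
    A + 1 / 2 * ‖x - p‖ ^ 2 ≤ B + 1 / 2 * ‖x - y‖ ^ 2 := by
  have h := (hp y).trans (add_le_add_left hB _)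
  rw [hA] at h
  exact_mod_cast h

variable [InnerProductSpace ℝ E]

theorem add_inner_le_s4 (hp : IsProx f x p) (hf : ERealConvexOn f) {v : E} {A B : ℝ} (hA : f p = A)
    (hB : f v = B) : A + ⟪x - p, v - p⟫_ℝ ≤ B := by
  refine le_of_forall_mem_Ioc_le_add_mul (M := 1 / 2 * ‖v - p‖ ^ 2) fun t ⟨ht0, ht1⟩ => ?_
  have hconv : f (p + t • (v - p)) ≤ ((1 - t) * A + t * B : ℝ) := by
    have h := hf p v (1 - t) t (by linarith) ht0.le (by ring)
    rw [show (1 - t) • p + t • v = p + t • (v - p) by module, hA, hB] at h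
    exact_mod_cast h
  have h := hp.add_half_sq_le hA hconv
  rw [show x - (p + t • (v - p)) = (x - p) - t • (v - p) by abel, norm_sub_sq_real (x - p),
    real_inner_smul_right, norm_smul, Real.norm_eq_abs, abs_of_pos ht0] at h
  have ht : t * (A + ⟪x - p, v - p⟫_ℝ) ≤ t * (B + t * (1 / 2 * ‖v - p‖ ^ 2)) := by linarith
  exact le_of_mul_le_mul_left ht ht0

theorem fenchel_sub_le (hp : IsProx f x p) (hf : ERealConvexOn f) (hbot : ∀ v, f v ≠ ⊥) {A : ℝ}
    (hA : f p = A) : fenchel f (x - p) ≤ ((⟪x - p, p⟫_ℝ - A : ℝ) : EReal) := by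
  refine iSup_le fun v => ?_
  by_cases htop : f v = ⊤
  · simp [htop]
  · lift f v to ℝ using ⟨htop, hbot v⟩ with B hB
    have h := hp.add_inner_le_s4 hf hA hB.symm
    rw [inner_sub_right] at h
    exact_mod_cast (by linarith : ⟪x - p, v⟫_ℝ - B ≤ ⟪x - p, p⟫_ℝ - A)

end IsProx

section MoreauEnvelope

variable {E : Type*} [NormedAddCommGroup E] {f : E → EReal} {proxf : E → E}

/-- The Moreau envelope `x ↦ min_y (f y + ½‖x - y‖²)`, evaluated at the proximal points `proxf x`
(the minimizers); `toReal` is faithful when the minimum is finite. -/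
def moreauEnvelope (f : E → EReal) (proxf : E → E) (x : E) : ℝ :=
  (f (proxf x)).toReal + 1 / 2 * ‖x - proxf x‖ ^ 2

theorem moreauEnvelope_le_add (hprox : ∀ x, IsProx f x (proxf x)) (hfin : ∀ x, f (proxf x) ≠ ⊤)
    (hbot : ∀ x, f x ≠ ⊥) {y : E} {B : ℝ} (hB : f y ≤ B) (x : E) :
    moreauEnvelope f proxf x ≤ B + 1 / 2 * ‖x - y‖ ^ 2 :=
  (hprox x).add_half_sq_le (EReal.coe_toReal (hfin x) (hbot _)).symm hB

theorem eq_self_of_moreauEnvelope_eq (hprox : ∀ x, IsProx f x (proxf x))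
    (hfin : ∀ x, f (proxf x) ≠ ⊤) (hbot : ∀ x, f x ≠ ⊥)
    (hconst : ∀ x y, moreauEnvelope f proxf x = moreauEnvelope f proxf y) (x : E) :
    proxf x = x := by
  have h := moreauEnvelope_le_add hprox hfin hbot (EReal.coe_toReal (hfin x) (hbot _)).ge (proxf x)
  rw [hconst (proxf x) x, moreauEnvelope, sub_self, norm_zero] at h
  have hsq : ‖x - proxf x‖ ^ 2 = 0 := by nlinarith [sq_nonneg ‖x - proxf x‖]
  exact (sub_eq_zero.1 (norm_eq_zero.1 (pow_eq_zero_iff two_ne_zero |>.1 hsq))).symm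

variable [InnerProductSpace ℝ E]

theorem convexOn_moreauEnvelope (hf : ERealConvexOn f) (hprox : ∀ x, IsProx f x (proxf x))
    (hfin : ∀ x, f (proxf x) ≠ ⊤) (hbot : ∀ x, f x ≠ ⊥) :
    ConvexOn ℝ univ (moreauEnvelope f proxf) := by
  refine ⟨convex_univ, fun x _ y _ a b ha hb hab => ?_⟩
  have hcomb : f (a • proxf x + b • proxf y)
      ≤ (a * (f (proxf x)).toReal + b * (f (proxf y)).toReal : ℝ) := by
    have h := hf (proxf x) (proxf y) a b ha hb hab
    rw [← EReal.coe_toReal (hfin x) (hbot _), ← EReal.coe_toReal (hfin y) (hbot _)] at h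
    exact_mod_cast h
  have hsq : ‖a • (x - proxf x) + b • (y - proxf y)‖ ^ 2
      ≤ a * ‖x - proxf x‖ ^ 2 + b * ‖y - proxf y‖ ^ 2 :=
    (convexOn_univ_norm.pow (fun _ _ => norm_nonneg _) 2).2 (mem_univ _) (mem_univ _) ha hb hab
  have h := moreauEnvelope_le_add hprox hfin hbot hcomb (a • x + b • y)
  rw [show a • x + b • y - (a • proxf x + b • proxf y)
    = a • (x - proxf x) + b • (y - proxf y) by module] at h
  simp only [moreauEnvelope, smul_eq_mul] at h ⊢
  linarith

theorem inner_sub_le_of_norm_le {x p : E} (h : ‖x‖ ≤ ‖p‖) :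
    ⟪x - p, p⟫_ℝ ≤ -(1 / 2 * ‖x - p‖ ^ 2) := by
  have hsq := norm_add_sq_real p (x - p)
  rw [add_sub_cancel, real_inner_comm] at hsq
  nlinarith [pow_le_pow_left₀ (norm_nonneg _) h 2]

theorem moreauEnvelope_le (hf : ERealConvexOn f) (hprox : ∀ x, IsProx f x (proxf x))
    (hfin : ∀ x, f (proxf x) ≠ ⊤) (hbot : ∀ x, f x ≠ ⊥) {c : ℝ}
    (hc : ∀ u, (c : EReal) ≤ fenchel f u) (hnorm : ∀ x, ‖x‖ ≤ ‖proxf x‖) (x : E) :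
    moreauEnvelope f proxf x ≤ -c := by
  have hconj : c ≤ ⟪x - proxf x, proxf x⟫_ℝ - (f (proxf x)).toReal := by
    exact_mod_cast (hc _).trans
      ((hprox x).fenchel_sub_le hf hbot (EReal.coe_toReal (hfin x) (hbot _)).symm)
  have := inner_sub_le_of_norm_le (hnorm x)
  rw [moreauEnvelope]
  linarith

end MoreauEnvelope

/-- If `g*` is bounded below and `‖x‖ ≤ ‖prox_g x‖` for all `x`, then `g` is constant. -/
theorem constant_of_norm_le_prox_norm
    (g : H → EReal) (hg : Gamma0 g)
    (hconj : ∃ c : ℝ, ∀ x, (c : EReal) ≤ fenchel g x)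
    (proxg : H → H) (hproxg : ∀ x, IsProx g x (proxg x))
    (h : ∀ x : H, ‖x‖ ≤ ‖proxg x‖) :
    ∃ c : ℝ, ∀ x, g x = (c : EReal) := by
  obtain ⟨hproper, hbot, hconv, -⟩ := hg
  obtain ⟨c, hc⟩ := hconj
  have hfin : ∀ x, g (proxg x) ≠ ⊤ := fun x => (hproxg x).ne_top_s4 hproper
  have hconst := (convexOn_moreauEnvelope hconv hproxg hfin hbot).eq_of_bddAbove
    ⟨-c, forall_mem_range.2 (moreauEnvelope_le hconv hproxg hfin hbot hc h)⟩
  have hid := eq_self_of_moreauEnvelope_eq hproxg hfin hbot hconst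
  refine ⟨moreauEnvelope g proxg 0, fun x => ?_⟩
  have hgx : moreauEnvelope g proxg x = (g x).toReal := by simp [moreauEnvelope, hid]
  rw [← EReal.coe_toReal (hid x ▸ hfin x) (hbot x), ← hgx, hconst x 0]
end
end

section
/- Let H be a real Hilbert space, let f, g ∈ Γ0(H), and let x₀ ∈ dom f ∩ dom g. If ‖prox_f(x) − x₀‖ = ‖prox_g(x) − x₀‖ for all x ∈ H, then f(x) − f(x₀) = g(x) − g(x₀) for all x ∈ H. -/
/-!
Write `Φ x = ½‖x - x₀‖² - e_f x`, where `e_f` is the Moreau envelope of `f`, and `Ψ` likewise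
for `g`. Both are convex and bounded below (by `-f x₀`, `-g x₀`), with the 1-Lipschitz gradients
`prox_f - x₀` and `prox_g - x₀`, which by hypothesis have the same norm everywhere. Along gradient
descent on `Ψ` the difference `Φ - Ψ` drops only by `γ² ∑ ‖∇Ψ‖²`, which is small, while the
iterates reach points where the common gradient norm is small; this forces `Φ - Ψ` to be constant.
Then `∇Φ = ∇Ψ`, i.e. `prox_f = prox_g`, and `f - g` is constant on the range of the prox. Finally
every `y ∈ dom f` is the limit of scaled proximal points of `f` at `y`, which lie in that range and
where `f` is at most `f y`; lower semicontinuity gives `f = g + κ` everywhere.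
-/

open scoped InnerProductSpace
noncomputable section

variable {H : Type*} [NormedAddCommGroup H] [InnerProductSpace ℝ H] [CompleteSpace H]

open Filter Topology

theorem EReal.exists_eq_coe_of_add_coe_le_coe {a : EReal} (ha : a ≠ ⊥) {c t : ℝ}
    (h : a + c ≤ t) : ∃ s : ℝ, a = s ∧ s + c ≤ t := by
  induction a with
  | bot => exact absurd rfl ha
  | top => simp at h
  | coe s => exact ⟨s, rfl, by exact_mod_cast h⟩

theorem EReal.add_coe_sub_add_coe (a b : EReal) (c : ℝ) : (a + c) - (b + c) = a - b := by
  induction a <;> induction b <;> simp [← EReal.coe_add, ← EReal.coe_sub]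

theorem tendsto_sqrt_mul_one_div_add_one (C : ℝ) :
    Tendsto (fun n : ℕ => Real.sqrt (C * (1 / ((n : ℝ) + 1)))) atTop (𝓝 0) := by
  simpa using (tendsto_one_div_add_atTop_nhds_zero_nat.const_mul C).sqrt

theorem apply_iterate_le_add_sum {α : Type*} {T : α → α} {F c : α → ℝ}
    (h : ∀ a, F (T a) ≤ F a + c a) (w : α) (n : ℕ) :
    F (T^[n] w) ≤ F w + ∑ i ∈ Finset.range n, c (T^[i] w) := by
  induction n with
  | zero => simp
  | succ n ih =>
    rw [Function.iterate_succ_apply', Finset.sum_range_succ]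
    linarith [h (T^[n] w)]

theorem exists_le_of_sq_dist_le {X : Type*} [MetricSpace X] [CompleteSpace X] {φ : X → EReal}
    (hφ : LowerSemicontinuous φ) {m K : ℝ} (hm : ∀ ε > 0, ∃ x, φ x ≤ ((m + ε : ℝ) : EReal))
    (hK : ∀ x y (ε δ : ℝ), φ x ≤ ((m + ε : ℝ) : EReal) → φ y ≤ ((m + δ : ℝ) : EReal) →
      dist x y ^ 2 ≤ K * (ε + δ)) :
    ∃ q, φ q ≤ m := by
  choose x hx using fun n : ℕ => hm (1 / ((n : ℝ) + 1)) Nat.one_div_pos_of_nat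
  have hK0 : 0 ≤ K := by
    nlinarith [hK (x 0) (x 0) _ _ (hx 0) (hx 0), Nat.one_div_pos_of_nat (α := ℝ) (n := 0)]
  have hdist (n k N : ℕ) (hn : N ≤ n) (hk : N ≤ k) :
      dist (x n) (x k) ≤ Real.sqrt (2 * K * (1 / ((N : ℝ) + 1))) := by
    refine Real.le_sqrt_of_sq_le ((hK _ _ _ _ (hx n) (hx k)).trans ?_)
    have hnN : 1 / ((n : ℝ) + 1) ≤ 1 / ((N : ℝ) + 1) := Nat.one_div_le_one_div hn
    have hkN : 1 / ((k : ℝ) + 1) ≤ 1 / ((N : ℝ) + 1) := Nat.one_div_le_one_div hk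
    nlinarith
  obtain ⟨q, hq⟩ := cauchySeq_tendsto_of_complete
    (cauchySeq_of_le_tendsto_0 _ hdist (tendsto_sqrt_mul_one_div_add_one (2 * K)))
  have hqk (k : ℕ) : φ q ≤ ((m + 1 / ((k : ℝ) + 1) : ℝ) : EReal) :=
    (hφ.isClosed_preimage _).mem_of_tendsto hq <| eventually_atTop.2 ⟨k, fun n hn =>
      (hx n).trans (EReal.coe_le_coe_iff.2 (by linarith [Nat.one_div_le_one_div (α := ℝ) hn]))⟩
  have hlim : Tendsto (fun k : ℕ => ((m + 1 / ((k : ℝ) + 1) : ℝ) : EReal)) atTop (𝓝 m) :=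
    EReal.tendsto_coe.2 (by simpa using tendsto_one_div_add_atTop_nhds_zero_nat.const_add m)
  exact ⟨q, ge_of_tendsto' hlim hqk⟩

section SubgradientField

variable {E : Type*} [NormedAddCommGroup E] [InnerProductSpace ℝ E]

def IsSubgradientField (Φ : E → ℝ) (u : E → E) : Prop :=
  ∀ x z, Φ x + ⟪u x, z - x⟫_ℝ ≤ Φ z

def gradientStep (v : E → E) (γ : ℝ) (a : E) : E :=
  a - γ • v a

namespace IsSubgradientField

variable {Φ Ψ : E → ℝ} {u v : E → E} {γ : ℝ}

theorem apply_gradientStep_add_le (hΨ : IsSubgradientField Ψ v) (hv : LipschitzWith 1 v)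
    (hγ : 0 ≤ γ) (a : E) : Ψ (gradientStep v γ a) + γ * (1 - γ) * ‖v a‖ ^ 2 ≤ Ψ a := by
  set b := gradientStep v γ a
  have hab : a - b = γ • v a := by simp [b, gradientStep]
  have hlip : ‖v a - v b‖ ≤ γ * ‖v a‖ := by
    simpa [hab, norm_smul, abs_of_nonneg hγ] using hv.norm_sub_le a b
  have hcs := real_inner_le_norm (v a - v b) (v a)
  have hstep := hΨ b a
  rw [hab, real_inner_smul_right,
    show ⟪v b, v a⟫_ℝ = ‖v a‖ ^ 2 - ⟪v a - v b, v a⟫_ℝ by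
      rw [inner_sub_left, real_inner_self_eq_norm_sq]; ring] at hstep
  nlinarith [mul_le_mul_of_nonneg_right hlip (norm_nonneg (v a))]

theorem sub_sub_le_apply_gradientStep (hΦ : IsSubgradientField Φ u)
    (hΨ : IsSubgradientField Ψ v) (hv : LipschitzWith 1 v) (hn : ∀ x, ‖u x‖ = ‖v x‖)
    (hγ : 0 ≤ γ) (a : E) :
    Φ a - Ψ a - γ ^ 2 * ‖v a‖ ^ 2 ≤ Φ (gradientStep v γ a) - Ψ (gradientStep v γ a) := by
  have hΦa := hΦ a (gradientStep v γ a)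
  rw [show gradientStep v γ a - a = -(γ • v a) by simp [gradientStep], inner_neg_right,
    real_inner_smul_right] at hΦa
  have hcs : ⟪u a, v a⟫_ℝ ≤ ‖v a‖ ^ 2 := by
    simpa [hn a, sq] using real_inner_le_norm (u a) (v a)
  nlinarith [hΨ.apply_gradientStep_add_le hv hγ a]

theorem norm_gradientStep_sub_sq_le (hΨ : IsSubgradientField Ψ v) (hγ : 0 ≤ γ) (a z : E) :
    ‖gradientStep v γ a - z‖ ^ 2 ≤ ‖a - z‖ ^ 2 + 2 * γ * (Ψ z - Ψ a) + γ ^ 2 * ‖v a‖ ^ 2 := by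
  have hΨa := hΨ a z
  rw [show z - a = -(a - z) by abel, inner_neg_right] at hΨa
  rw [gradientStep, show a - γ • v a - z = (a - z) - γ • v a by abel, norm_sub_sq_real,
    real_inner_smul_right, norm_smul, Real.norm_eq_abs, abs_of_nonneg hγ, real_inner_comm]
  nlinarith

/-- Gradient descent on `Ψ` started at `w`: each step lowers `Ψ` by at least `γ/2 ‖v‖²` but
`Φ - Ψ` by at most `γ² ‖v‖²`, so `Φ - Ψ` drops by at most `2γ (Ψ w - m)` in total, and among the
first `N` iterates one has `‖v‖² ≤ 2 (Ψ w - m) / (γ N)` while staying close to the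
near-minimizer `z`. -/
theorem exists_descent_iterate (hΦ : IsSubgradientField Φ u) (hΨ : IsSubgradientField Ψ v)
    (hv : LipschitzWith 1 v) (hn : ∀ x, ‖u x‖ = ‖v x‖) {m : ℝ} (hm : ∀ a, m ≤ Ψ a)
    (hγ0 : 0 < γ) (hγ : γ ≤ 1 / 2) {z : E} {ε : ℝ} (hz : ∀ a, Ψ z ≤ Ψ a + ε) (w : E)
    {N : ℕ} (hN : 0 < N) :
    ∃ y, Φ w - Ψ w ≤ Φ y - Ψ y + 2 * γ * (Ψ w - m) ∧ γ * N * ‖v y‖ ^ 2 ≤ 2 * (Ψ w - m) ∧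
      ‖y - z‖ ^ 2 ≤ ‖w - z‖ ^ 2 + 2 * γ * ε * N + 2 * γ * (Ψ w - m) := by
  set X : ℕ → E := fun n => (gradientStep v γ)^[n] w
  set S : ℕ → ℝ := fun n => ∑ i ∈ Finset.range n, ‖v (X i)‖ ^ 2
  have hγS (n : ℕ) : γ * S n ≤ 2 * (Ψ w - m) := by
    have h := apply_iterate_le_add_sum (T := gradientStep v γ) (F := Ψ)
      (c := fun a => -(γ / 2 * ‖v a‖ ^ 2))
      (fun a => by
        nlinarith [hΨ.apply_gradientStep_add_le hv hγ0.le a,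
          mul_nonneg (mul_nonneg hγ0.le (sub_nonneg.2 hγ)) (sq_nonneg ‖v a‖)]) w n
    rw [Finset.sum_neg_distrib, ← Finset.mul_sum] at h
    linarith [hm (X n)]
  have hdiff (n : ℕ) : Φ w - Ψ w - γ ^ 2 * S n ≤ Φ (X n) - Ψ (X n) := by
    have h := apply_iterate_le_add_sum (T := gradientStep v γ) (F := fun a => Ψ a - Φ a)
      (c := fun a => γ ^ 2 * ‖v a‖ ^ 2)
      (fun a => by linarith [hΦ.sub_sub_le_apply_gradientStep hΨ hv hn hγ0.le a]) w n
    rw [← Finset.mul_sum] at h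
    linarith
  have hdist (n : ℕ) : ‖X n - z‖ ^ 2 ≤ ‖w - z‖ ^ 2 + 2 * γ * ε * n + γ ^ 2 * S n := by
    have h := apply_iterate_le_add_sum (T := gradientStep v γ) (F := fun a => ‖a - z‖ ^ 2)
      (c := fun a => 2 * γ * ε + γ ^ 2 * ‖v a‖ ^ 2)
      (fun a => by nlinarith [hΨ.norm_gradientStep_sub_sq_le hγ0.le a z, hz a]) w n
    rw [Finset.sum_add_distrib, Finset.sum_const, Finset.card_range, nsmul_eq_mul,
      ← Finset.mul_sum] at h
    linarith
  obtain ⟨i, hi, hiN⟩ : ∃ i ∈ Finset.range N, ‖v (X i)‖ ^ 2 ≤ S N / N := by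
    refine Finset.exists_le_of_sum_le (Finset.nonempty_range_iff.2 hN.ne') ?_
    rw [Finset.sum_const, Finset.card_range, nsmul_eq_mul, mul_div_cancel₀ _ (by positivity)]
  have hiN' : (i : ℝ) ≤ N := by exact_mod_cast (Finset.mem_range.1 hi).le
  have hε : 0 ≤ ε := by linarith [hz z]
  have hγ2S : γ ^ 2 * S i ≤ 2 * γ * (Ψ w - m) := by nlinarith [hγS i]
  refine ⟨X i, by linarith [hdiff i], ?_, ?_⟩
  · rw [le_div_iff₀ (by positivity)] at hiN
    nlinarith [hγS N]
  · nlinarith [hdist i, mul_le_mul_of_nonneg_left hiN' (by positivity : 0 ≤ 2 * γ * ε)]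

theorem exists_sub_add_le (hΦ : IsSubgradientField Φ u) (hΨ : IsSubgradientField Ψ v)
    (hv : LipschitzWith 1 v) (hn : ∀ x, ‖u x‖ = ‖v x‖) {m : ℝ} (hm : ∀ a, m ≤ Ψ a)
    (hγ0 : 0 < γ) (hγ : γ ≤ 1 / 2) {z : E} {ε : ℝ} (hz : ∀ a, Ψ z ≤ Ψ a + ε) (x w : E)
    {N : ℕ} (hN : 0 < N) :
    ∃ t, Φ w - Ψ w + m ≤ Φ x + 2 * γ * (Ψ w - m) + t ∧ γ * N * t ^ 2 ≤
      2 * (Ψ w - m) * (2 * ‖x - z‖ ^ 2 + 2 * ‖w - z‖ ^ 2 + 4 * γ * (Ψ w - m) + 4 * γ * ε * N) := by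
  obtain ⟨y, hΦΨ, hvy, hyz⟩ := hΦ.exists_descent_iterate hΨ hv hn hm hγ0 hγ hz w hN
  have hΦy : Φ y ≤ Φ x + ‖v y‖ * ‖x - y‖ := by
    have := neg_abs_le ⟪u y, x - y⟫_ℝ
    rw [← hn y]
    linarith [hΦ y x, abs_real_inner_le_norm (u y) (x - y)]
  have hxy : ‖x - y‖ ^ 2
      ≤ 2 * ‖x - z‖ ^ 2 + 2 * ‖w - z‖ ^ 2 + 4 * γ * (Ψ w - m) + 4 * γ * ε * N := by
    have htri := norm_sub_le_norm_sub_add_norm_sub x z y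
    rw [norm_sub_rev z y] at htri
    nlinarith [norm_nonneg (x - y), sq_nonneg (‖x - z‖ - ‖y - z‖)]
  refine ⟨‖v y‖ * ‖x - y‖, by linarith [hm y], ?_⟩
  rw [mul_pow, ← mul_assoc]
  exact mul_le_mul hvy hxy (sq_nonneg _) (by linarith [hm w])

theorem sub_add_iInf_le (hΦ : IsSubgradientField Φ u) (hΨ : IsSubgradientField Ψ v)
    (hv : LipschitzWith 1 v) (hn : ∀ x, ‖u x‖ = ‖v x‖) (hΨb : BddBelow (Set.range Ψ))
    (x w : E) : Φ w - Ψ w + ⨅ a, Ψ a ≤ Φ x := by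
  set m := ⨅ a, Ψ a
  set C := Ψ w - m
  have hm (a : E) : m ≤ Ψ a := ciInf_le hΨb a
  have hC : 0 ≤ C := sub_nonneg.2 (hm w)
  refine le_of_forall_pos_le_add fun δ hδ => ?_
  set γ := min (1 / 2) (δ / (4 * (C + 1)))
  have hγ0 : 0 < γ := lt_min (by norm_num) (by positivity)
  have hγC : 2 * γ * C ≤ δ / 2 := by
    have := (le_div_iff₀ (by positivity)).1 (min_le_right (1 / 2) (δ / (4 * (C + 1))))
    nlinarith
  set ε := δ ^ 2 / (64 * (C + 1))
  have hεC : 8 * C * ε ≤ δ ^ 2 / 8 := by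
    have : ε * (64 * (C + 1)) = δ ^ 2 := div_mul_cancel₀ _ (by positivity)
    nlinarith [sq_nonneg δ]
  obtain ⟨z, hz⟩ : ∃ z, Ψ z < m + ε :=
    exists_lt_of_ciInf_lt (lt_add_of_pos_right m (by positivity))
  set R := 2 * ‖x - z‖ ^ 2 + 2 * ‖w - z‖ ^ 2 + 4 * γ * C
  obtain ⟨N, hN⟩ := exists_nat_gt (16 * C * R / (γ * δ ^ 2))
  have hN0 : (0 : ℝ) < N := lt_of_le_of_lt (by positivity) hN
  have hNR : 16 * C * R ≤ γ * δ ^ 2 * N := by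
    have := (div_lt_iff₀ (by positivity)).1 hN
    linarith
  obtain ⟨t, hle, ht⟩ := hΦ.exists_sub_add_le hΨ hv hn hm hγ0 (min_le_left _ _) (z := z)
    (ε := ε)
    (fun a => by linarith [hm a]) x w (N := N) (by exact_mod_cast hN0)
  have htδ : t ^ 2 ≤ (δ / 2) ^ 2 := by
    have := mul_le_mul_of_nonneg_left hεC (by positivity : 0 ≤ γ * N)
    refine le_of_mul_le_mul_left ?_ (by positivity : 0 < γ * N)
    nlinarith
  linarith [(abs_le_of_sq_le_sq' htδ (by positivity)).2]

theorem sub_eq_sub_of_norm_eq (hΦ : IsSubgradientField Φ u) (hΨ : IsSubgradientField Ψ v)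
    (hu : LipschitzWith 1 u) (hv : LipschitzWith 1 v) (hn : ∀ x, ‖u x‖ = ‖v x‖)
    (hΦb : BddBelow (Set.range Φ)) (hΨb : BddBelow (Set.range Ψ)) (x y : E) :
    Φ x - Ψ x = Φ y - Ψ y := by
  have key (x w : E) : Φ w - Ψ w ≤ Φ x - Ψ x := by
    have h1 : Φ w - Ψ w + ⨅ a, Ψ a ≤ ⨅ a, Φ a :=
      le_ciInf fun a => hΦ.sub_add_iInf_le hΨ hv hn hΨb a w
    have h2 : Ψ x - Φ x + ⨅ a, Φ a ≤ ⨅ a, Ψ a :=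
      le_ciInf fun a => hΨ.sub_add_iInf_le hΦ hu (fun a => (hn a).symm) hΦb a x
    linarith
  exact le_antisymm (key y x) (key x y)

theorem eq_of_sub_eq_sub (hΦ : IsSubgradientField Φ u) (hΨ : IsSubgradientField Ψ v)
    (hv : LipschitzWith 1 v) (hc : ∀ x y, Φ x - Ψ x = Φ y - Ψ y) : u = v := by
  funext x
  set d := u x - v x
  set z := x + (1 / 2 : ℝ) • d
  have hzx : z - x = (1 / 2 : ℝ) • d := by simp [z]
  have hΦx := hΦ x z
  have hΨz := hΨ z x
  rw [hzx, real_inner_smul_right] at hΦx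
  rw [show x - z = -((1 / 2 : ℝ) • d) by simp [z], inner_neg_right, real_inner_smul_right] at hΨz
  have hlip : ⟪v z - v x, d⟫_ℝ ≤ 1 / 2 * ‖d‖ ^ 2 := by
    have h := hv.norm_sub_le z x
    rw [NNReal.coe_one, one_mul, hzx, norm_smul, Real.norm_of_nonneg (by norm_num)] at h
    nlinarith [real_inner_le_norm (v z - v x) d, norm_nonneg d]
  have hd : ‖d‖ ^ 2 = ⟪u x, d⟫_ℝ - ⟪v z, d⟫_ℝ + ⟪v z - v x, d⟫_ℝ := by
    rw [← real_inner_self_eq_norm_sq, inner_sub_left, inner_sub_left]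
    ring
  have hd0 : ‖d‖ ^ 2 ≤ 0 := by linarith [hc x z]
  exact sub_eq_zero.1 (norm_eq_zero.1 (pow_eq_zero_iff two_ne_zero |>.1
    (le_antisymm hd0 (sq_nonneg _))))

end IsSubgradientField

end SubgradientField

section ScaledProx

variable {E : Type*} [NormedAddCommGroup E] {f : E → EReal} {P : E → E}

/-- `p` is the proximal point of `α⁻¹ • f` at `x`. -/
def IsScaledProx (α : ℝ) (f : E → EReal) (x p : E) : Prop :=
  ∀ y : E, f p + ((α / 2 * ‖x - p‖ ^ 2 : ℝ) : EReal) ≤ f y + ((α / 2 * ‖x - y‖ ^ 2 : ℝ) : EReal)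

theorem IsProx.isScaledProx_one {f : E → EReal} {x p : E} (h : IsProx f x p) :
    IsScaledProx 1 f x p :=
  h

namespace IsScaledProx

variable {α : ℝ} {x p : E}

theorem ne_top (hdom : ∃ y, f y ≠ ⊤) (hp : IsScaledProx α f x p) : f p ≠ ⊤ := by
  obtain ⟨y, hy⟩ := hdom
  intro htop
  have h := hp y
  rw [htop, EReal.top_add_coe] at h
  exact lt_irrefl _ (h.trans_lt (EReal.add_lt_top hy (EReal.coe_ne_top _)))

theorem exists_eq_coe (hdom : ∃ y, f y ≠ ⊤) (hbot : ∀ y, f y ≠ ⊥)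
    (hp : IsScaledProx α f x p) : ∃ r : ℝ, f p = r :=
  ⟨_, (EReal.coe_toReal (hp.ne_top hdom) (hbot p)).symm⟩

theorem le_of_le_coe (hp : IsScaledProx α f x p) {y : E} {r s : ℝ} (hr : f p = r)
    (hs : f y ≤ s) : r + α / 2 * ‖x - p‖ ^ 2 ≤ s + α / 2 * ‖x - y‖ ^ 2 := by
  have h := (hp y).trans (add_le_add_left hs _)
  rw [hr] at h
  exact_mod_cast h

theorem apply_le (hα : 0 ≤ α) (hp : IsScaledProx α f x p) : f p ≤ f x :=
  calc f p ≤ f p + ((α / 2 * ‖x - p‖ ^ 2 : ℝ) : EReal) :=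
        le_add_of_nonneg_right (EReal.coe_nonneg.2 (by positivity))
    _ ≤ f x + ((α / 2 * ‖x - x‖ ^ 2 : ℝ) : EReal) := hp x
    _ = f x := by simp

end IsScaledProx

theorem IsProx.coe_sub_le {x p : E} (hp : IsProx f x p) {r : ℝ} (hr : f p = r) (w : E) :
    ((r + 1 / 2 * ‖x - p‖ ^ 2 - 1 / 2 * ‖x - w‖ ^ 2 : ℝ) : EReal) ≤ f w := by
  rw [EReal.coe_sub, EReal.coe_add, ← hr]
  exact EReal.sub_le_of_le_add (hp w)

theorem tendsto_of_isScaledProx (hbot : ∀ y, f y ≠ ⊥) {B : ℝ} {b : E}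
    (hB : ∀ w, ((B - 1 / 2 * ‖b - w‖ ^ 2 : ℝ) : EReal) ≤ f w) {y : E} (hy : f y ≠ ⊤)
    {q : ℕ → E} (hq : ∀ n : ℕ, IsScaledProx (n + 3) f y (q n)) : Tendsto q atTop (𝓝 y) := by
  obtain ⟨s, hs⟩ : ∃ s : ℝ, f y = s := ⟨_, (EReal.coe_toReal hy (hbot y)).symm⟩
  set K := s - B + ‖b - y‖ ^ 2
  have hbound (n : ℕ) : ‖q n - y‖ ≤ Real.sqrt (2 * K * (1 / ((n : ℝ) + 1))) := by
    obtain ⟨t, ht⟩ := (hq n).exists_eq_coe ⟨y, hy⟩ hbot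
    have h1 := (hq n).le_of_le_coe ht hs.le
    have h2 : B - 1 / 2 * ‖b - q n‖ ^ 2 ≤ t := by
      simpa only [ht, EReal.coe_le_coe_iff] using hB (q n)
    have htri := norm_sub_le_norm_sub_add_norm_sub b y (q n)
    rw [sub_self, norm_zero] at h1
    rw [norm_sub_rev]
    refine Real.le_sqrt_of_sq_le ?_
    rw [← mul_div_assoc, mul_one, le_div_iff₀ (by positivity)]
    nlinarith [norm_nonneg (b - q n), sq_nonneg (‖b - y‖ - ‖y - q n‖), sq_nonneg ‖y - q n‖]
  exact tendsto_iff_norm_sub_tendsto_zero.2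
    (squeeze_zero (fun n => norm_nonneg _) hbound (tendsto_sqrt_mul_one_div_add_one _))

/-- For `P = prox_f`, this is `½‖x - x₀‖²` minus the Moreau envelope of `f`: a convex function
with gradient `P x - x₀`. -/
def proxPotential (f : E → EReal) (P : E → E) (x₀ x : E) : ℝ :=
  1 / 2 * ‖x - x₀‖ ^ 2 - ((f (P x)).toReal + 1 / 2 * ‖x - P x‖ ^ 2)

theorem neg_toReal_le_proxPotential (hdom : ∃ y, f y ≠ ⊤) (hbot : ∀ y, f y ≠ ⊥)
    (hP : ∀ x, IsProx f x (P x)) {x₀ : E} (hx₀ : f x₀ ≠ ⊤) (x : E) :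
    -(f x₀).toReal ≤ proxPotential f P x₀ x := by
  obtain ⟨r, hr⟩ := (hP x).isScaledProx_one.exists_eq_coe hdom hbot
  have h := (hP x).isScaledProx_one.le_of_le_coe hr (EReal.coe_toReal hx₀ (hbot x₀)).ge
  simp only [proxPotential, hr, EReal.toReal_coe]
  linarith

theorem exists_eq_add_of_proxPotential_sub_eq {g : E → EReal} (hdomf : ∃ y, f y ≠ ⊤)
    (hbotf : ∀ y, f y ≠ ⊥) (hdomg : ∃ y, g y ≠ ⊤) (hbotg : ∀ y, g y ≠ ⊥)
    (hPf : ∀ x, IsProx f x (P x)) (hPg : ∀ x, IsProx g x (P x)) {x₀ : E}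
    (hc : ∀ x y, proxPotential f P x₀ x - proxPotential g P x₀ x
      = proxPotential f P x₀ y - proxPotential g P x₀ y) :
    ∃ κ : ℝ, ∀ x, f (P x) = g (P x) + κ := by
  refine ⟨(f (P x₀)).toReal - (g (P x₀)).toReal, fun x => ?_⟩
  have h := hc x x₀
  simp only [proxPotential] at h
  rw [← EReal.coe_toReal ((hPf x).isScaledProx_one.ne_top hdomf) (hbotf _),
    ← EReal.coe_toReal ((hPg x).isScaledProx_one.ne_top hdomg) (hbotg _), ← EReal.coe_add]
  congr 1
  linarith

end ScaledProx

section ConvexProx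

variable {E : Type*} [NormedAddCommGroup E] [InnerProductSpace ℝ E] {f : E → EReal} {P : E → E}

theorem ERealConvexOn.le_coe (hf : ERealConvexOn f) {x y : E} {r s a b : ℝ}
    (hx : f x = r) (hy : f y = s) (ha : 0 ≤ a) (hb : 0 ≤ b) (hab : a + b = 1) :
    f (a • x + b • y) ≤ ((a * r + b * s : ℝ) : EReal) := by
  simpa [hx, hy] using hf x y a b ha hb hab

theorem isProx_add_of_add_inner_le {p s : E} {r : ℝ} (hr : f p = r)
    (hs : ∀ y, ((r + ⟪s, y - p⟫_ℝ : ℝ) : EReal) ≤ f y) : IsProx f (p + s) p := by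
  intro y
  rcases eq_or_ne (f y) ⊤ with hy | hy
  · rw [hy, EReal.top_add_coe]
    exact le_top
  obtain ⟨t, ht⟩ : ∃ t : ℝ, f y = t :=
    ⟨_, (EReal.coe_toReal hy (ne_bot_of_le_ne_bot (EReal.coe_ne_bot _) (hs y))).symm⟩
  have hst : r + ⟪s, y - p⟫_ℝ ≤ t := by simpa only [ht, EReal.coe_le_coe_iff] using hs y
  rw [hr, ht, ← EReal.coe_add, ← EReal.coe_add, EReal.coe_le_coe_iff,
    show p + s - p = s by abel, show p + s - y = s - (y - p) by abel, norm_sub_sq_real]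
  nlinarith [sq_nonneg ‖y - p‖]

namespace IsScaledProx

variable {α : ℝ} {x z p q : E}

/-- The variational inequality: `α • (x - p)` is a subgradient of `f` at `p`. -/
theorem add_inner_le (hconv : ERealConvexOn f) (hbot : ∀ y, f y ≠ ⊥)
    (hp : IsScaledProx α f x p) {r : ℝ} (hr : f p = r) (y : E) :
    ((r + α * ⟪x - p, y - p⟫_ℝ : ℝ) : EReal) ≤ f y := by
  rcases eq_or_ne (f y) ⊤ with hy | hy
  · simp [hy]
  obtain ⟨s, hs⟩ : ∃ s : ℝ, f y = s := ⟨_, (EReal.coe_toReal hy (hbot y)).symm⟩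
  rw [hs, EReal.coe_le_coe_iff]
  have key : ∀ t ∈ Set.Ioc (0 : ℝ) 1,
      r + α * ⟪x - p, y - p⟫_ℝ ≤ s + α * t / 2 * ‖y - p‖ ^ 2 := by
    rintro t ⟨ht0, ht1⟩
    have h := hp.le_of_le_coe hr (hconv.le_coe hs hr ht0.le (sub_nonneg.2 ht1) (by ring))
    have hexp : ‖x - (t • y + (1 - t) • p)‖ ^ 2
        = ‖x - p‖ ^ 2 - 2 * t * ⟪x - p, y - p⟫_ℝ + t ^ 2 * ‖y - p‖ ^ 2 := by
      rw [show x - (t • y + (1 - t) • p) = (x - p) - t • (y - p) by module,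
        norm_sub_sq_real, real_inner_smul_right, norm_smul, mul_pow, Real.norm_eq_abs, sq_abs]
      ring
    rw [hexp] at h
    refine le_of_mul_le_mul_left ?_ ht0
    linarith
  have hcont : Continuous fun t : ℝ => s + α * t / 2 * ‖y - p‖ ^ 2 := by fun_prop
  have hlim : Tendsto (fun t : ℝ => s + α * t / 2 * ‖y - p‖ ^ 2) (𝓝[>] 0) (𝓝 s) :=
    tendsto_nhdsWithin_of_tendsto_nhds (by simpa using hcont.tendsto 0)
  exact ge_of_tendsto hlim (eventually_of_mem (Ioc_mem_nhdsGT one_pos) key)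

/-- Firm nonexpansiveness, from the monotonicity of the subgradients `α • (x - p)`. -/
theorem norm_sub_sq_le_inner (hdom : ∃ y, f y ≠ ⊤) (hbot : ∀ y, f y ≠ ⊥)
    (hconv : ERealConvexOn f) (hα : 0 < α) (hp : IsScaledProx α f x p)
    (hq : IsScaledProx α f z q) : ‖p - q‖ ^ 2 ≤ ⟪x - z, p - q⟫_ℝ := by
  obtain ⟨r, hr⟩ := hp.exists_eq_coe hdom hbot
  obtain ⟨w, hw⟩ := hq.exists_eq_coe hdom hbot
  have hpq : r + α * ⟪x - p, q - p⟫_ℝ ≤ w := by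
    simpa only [hw, EReal.coe_le_coe_iff] using hp.add_inner_le hconv hbot hr q
  have hqp : w + α * ⟪z - q, p - q⟫_ℝ ≤ r := by
    simpa only [hr, EReal.coe_le_coe_iff] using hq.add_inner_le hconv hbot hw p
  have hsum : ⟪x - p, q - p⟫_ℝ + ⟪z - q, p - q⟫_ℝ = ‖p - q‖ ^ 2 - ⟪x - z, p - q⟫_ℝ := by
    rw [← real_inner_self_eq_norm_sq]
    simp only [inner_sub_left, inner_sub_right, real_inner_comm]
    ring
  nlinarith

theorem eq (hdom : ∃ y, f y ≠ ⊤) (hbot : ∀ y, f y ≠ ⊥) (hconv : ERealConvexOn f)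
    (hα : 0 < α) (hp : IsScaledProx α f x p) (hq : IsScaledProx α f x q) : p = q := by
  have h := norm_sub_sq_le_inner hdom hbot hconv hα hp hq
  rw [sub_self, inner_zero_left] at h
  exact sub_eq_zero.1 (norm_eq_zero.1 (pow_eq_zero_iff two_ne_zero |>.1
    (le_antisymm h (sq_nonneg _))))

theorem prox_eq (hdom : ∃ y, f y ≠ ⊤) (hbot : ∀ y, f y ≠ ⊥)
    (hconv : ERealConvexOn f) (hP : ∀ x, IsProx f x (P x)) {y : E}
    (hq : IsScaledProx α f y q) : P (q + α • (y - q)) = q := by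
  obtain ⟨r, hr⟩ := hq.exists_eq_coe hdom hbot
  refine IsScaledProx.eq hdom hbot hconv one_pos (hP _).isScaledProx_one
    (isProx_add_of_add_inner_le hr fun w => ?_).isScaledProx_one
  simpa only [real_inner_smul_left] using hq.add_inner_le hconv hbot hr w

end IsScaledProx

theorem lipschitzWith_one_of_isProx (hdom : ∃ y, f y ≠ ⊤) (hbot : ∀ y, f y ≠ ⊥)
    (hconv : ERealConvexOn f) (hP : ∀ x, IsProx f x (P x)) : LipschitzWith 1 P := by
  refine lipschitzWith_iff_norm_sub_le.2 fun x z => ?_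
  have h := IsScaledProx.norm_sub_sq_le_inner hdom hbot hconv one_pos
    (hP x).isScaledProx_one (hP z).isScaledProx_one
  have hcs := real_inner_le_norm (x - z) (P x - P z)
  rw [NNReal.coe_one, one_mul]
  nlinarith [norm_nonneg (P x - P z), norm_nonneg (x - z)]

theorem isSubgradientField_proxPotential (hdom : ∃ y, f y ≠ ⊤) (hbot : ∀ y, f y ≠ ⊥)
    (hP : ∀ x, IsProx f x (P x)) (x₀ : E) :
    IsSubgradientField (proxPotential f P x₀) (fun x => P x - x₀) := by
  intro x z
  obtain ⟨r, hr⟩ := (hP x).isScaledProx_one.exists_eq_coe hdom hbot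
  obtain ⟨s, hs⟩ := (hP z).isScaledProx_one.exists_eq_coe hdom hbot
  have h := (hP z).isScaledProx_one.le_of_le_coe hs hr.le
  have hid : 1 / 2 * ‖z - x₀‖ ^ 2 - 1 / 2 * ‖x - x₀‖ ^ 2 + 1 / 2 * ‖x - P x‖ ^ 2
      - 1 / 2 * ‖z - P x‖ ^ 2 = ⟪P x - x₀, z - x⟫_ℝ := by
    simp only [norm_sub_sq_real, inner_sub_left, inner_sub_right, real_inner_comm]
    ring
  simp only [proxPotential, hr, hs, EReal.toReal_coe]
  linarith

theorem ERealConvexOn.norm_sub_sq_le (hconv : ERealConvexOn f) (hbot : ∀ y, f y ≠ ⊥)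
    {α m : ℝ} (hα : 0 < α) {y : E}
    (hm : ∀ w, (m : EReal) ≤ f w + ((α / 2 * ‖y - w‖ ^ 2 : ℝ) : EReal)) {a c : E} {ε δ : ℝ}
    (ha : f a + ((α / 2 * ‖y - a‖ ^ 2 : ℝ) : EReal) ≤ ((m + ε : ℝ) : EReal))
    (hc : f c + ((α / 2 * ‖y - c‖ ^ 2 : ℝ) : EReal) ≤ ((m + δ : ℝ) : EReal)) :
    ‖a - c‖ ^ 2 ≤ 4 / α * (ε + δ) := by
  obtain ⟨s, hs, ha⟩ := EReal.exists_eq_coe_of_add_coe_le_coe (hbot a) ha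
  obtain ⟨t, ht, hc⟩ := EReal.exists_eq_coe_of_add_coe_le_coe (hbot c) hc
  set mid := (1 / 2 : ℝ) • a + (1 / 2 : ℝ) • c
  have h := (hm mid).trans
    (add_le_add_left (hconv.le_coe (a := 1 / 2) (b := 1 / 2) hs ht (by norm_num) (by norm_num)
      (by norm_num)) _)
  rw [← EReal.coe_add, EReal.coe_le_coe_iff] at h
  have hpar : ‖y - mid‖ ^ 2 = 1 / 2 * ‖y - a‖ ^ 2 + 1 / 2 * ‖y - c‖ ^ 2 - 1 / 4 * ‖a - c‖ ^ 2 := by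
    have key (A C : E) : ‖(1 / 2 : ℝ) • (A + C)‖ ^ 2
        = 1 / 2 * ‖A‖ ^ 2 + 1 / 2 * ‖C‖ ^ 2 - 1 / 4 * ‖C - A‖ ^ 2 := by
      rw [norm_smul, mul_pow, norm_add_sq_real, norm_sub_sq_real, real_inner_comm,
        Real.norm_of_nonneg (by norm_num)]
      ring
    rw [show y - mid = (1 / 2 : ℝ) • ((y - a) + (y - c)) by module,
      show a - c = (y - c) - (y - a) by abel, key]
  rw [hpar] at h
  rw [div_mul_eq_mul_div, le_div_iff₀ hα]
  nlinarith

theorem exists_isScaledProx [CompleteSpace E] (hdom : ∃ y, f y ≠ ⊤) (hbot : ∀ y, f y ≠ ⊥)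
    (hconv : ERealConvexOn f) (hlsc : LowerSemicontinuous f) {B : ℝ} {b : E}
    (hB : ∀ w, ((B - 1 / 2 * ‖b - w‖ ^ 2 : ℝ) : EReal) ≤ f w) {α : ℝ} (hα : 2 ≤ α) (y : E) :
    ∃ q, IsScaledProx α f y q := by
  set φ : E → EReal := fun w => f w + ((α / 2 * ‖y - w‖ ^ 2 : ℝ) : EReal)
  have hφ : LowerSemicontinuous φ :=
    hlsc.add' (continuous_coe_real_ereal.comp (by fun_prop :
      Continuous fun w => α / 2 * ‖y - w‖ ^ 2)).lowerSemicontinuous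
      fun w => EReal.continuousAt_add (Or.inr (EReal.coe_ne_bot _)) (Or.inr (EReal.coe_ne_top _))
  have hlow (w : E) : ((B - ‖b - y‖ ^ 2 : ℝ) : EReal) ≤ φ w := by
    have htri := norm_sub_le_norm_sub_add_norm_sub b y w
    calc ((B - ‖b - y‖ ^ 2 : ℝ) : EReal)
        ≤ ((B - 1 / 2 * ‖b - w‖ ^ 2 + α / 2 * ‖y - w‖ ^ 2 : ℝ) : EReal) := by
          rw [EReal.coe_le_coe_iff]
          nlinarith [norm_nonneg (b - w), sq_nonneg (‖b - y‖ - ‖y - w‖), sq_nonneg ‖y - w‖]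
      _ ≤ φ w := by rw [EReal.coe_add]; exact add_le_add_left (hB w) _
  set M := ⨅ w, φ w
  have hM : (M.toReal : EReal) = M := by
    refine EReal.coe_toReal ?_ (ne_bot_of_le_ne_bot (EReal.coe_ne_bot _) (le_iInf hlow))
    obtain ⟨w, hw⟩ := hdom
    exact ((iInf_le φ w).trans_lt (EReal.add_lt_top hw (EReal.coe_ne_top _))).ne
  have hMle (w : E) : (M.toReal : EReal) ≤ φ w := hM.trans_le (iInf_le φ w)
  obtain ⟨q, hq⟩ := exists_le_of_sq_dist_le hφ (m := M.toReal) (K := 4 / α)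
    (fun ε hε => by
      obtain ⟨x, hx⟩ := iInf_lt_iff.1 (show M < ((M.toReal + ε : ℝ) : EReal) from
        hM.symm.trans_lt (EReal.coe_lt_coe_iff.2 (by linarith)))
      exact ⟨x, hx.le⟩)
    (fun a c ε δ ha hc => by
      rw [dist_eq_norm]; exact hconv.norm_sub_sq_le hbot (by linarith) hMle ha hc)
  exact ⟨q, fun z => hq.trans (hMle z)⟩

/-- The `(n + 3)`-scaled proximal points of `f` at `y` lie in the range of `P`, tend to `y`
and do not exceed `f y`; lower semicontinuity of `g` concludes. -/
theorem le_add_of_forall_le_add_prox [CompleteSpace E] {g : E → EReal}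
    (hdom : ∃ y, f y ≠ ⊤) (hbot : ∀ y, f y ≠ ⊥) (hconv : ERealConvexOn f)
    (hlsc : LowerSemicontinuous f) (hg : LowerSemicontinuous g) {P : E → E}
    (hP : ∀ x, IsProx f x (P x)) {c : ℝ} (h : ∀ x, g (P x) ≤ f (P x) + c) (y : E) :
    g y ≤ f y + c := by
  rcases eq_or_ne (f y) ⊤ with hy | hy
  · rw [hy, EReal.top_add_coe]
    exact le_top
  obtain ⟨r, hr⟩ := (hP y).isScaledProx_one.exists_eq_coe hdom hbot
  choose q hq using fun n : ℕ =>
    exists_isScaledProx hdom hbot hconv hlsc ((hP y).coe_sub_le hr) (α := n + 3) (by linarith) y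
  have hle (n : ℕ) : g (q n) ≤ f y + c := by
    rw [← (hq n).prox_eq hdom hbot hconv hP]
    refine (h _).trans (add_le_add_left ?_ _)
    rw [(hq n).prox_eq hdom hbot hconv hP]
    exact (hq n).apply_le (by positivity)
  exact (hg.isClosed_preimage _).mem_of_tendsto
    (tendsto_of_isScaledProx hbot ((hP y).coe_sub_le hr) hy hq) (Eventually.of_forall hle)

theorem eq_add_of_forall_eq_add_prox [CompleteSpace E] {g : E → EReal} (hf : Gamma0 f)
    (hg : Gamma0 g) (hPf : ∀ x, IsProx f x (P x)) (hPg : ∀ x, IsProx g x (P x))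
    {κ : ℝ} (h : ∀ x, f (P x) = g (P x) + κ) (y : E) : f y = g y + κ := by
  have hfg := le_add_of_forall_le_add_prox hg.1 hg.2.1 hg.2.2.1 hg.2.2.2 hf.2.2.2 hPg
    (fun x => (h x).le) y
  have hgf := le_add_of_forall_le_add_prox hf.1 hf.2.1 hf.2.2.1 hf.2.2.2 hg.2.2.2 hPf
    (c := -κ) (fun x => by rw [h, add_assoc, ← EReal.coe_add, add_neg_cancel, EReal.coe_zero,
      add_zero]) y
  refine le_antisymm hfg ((add_le_add_left hgf _).trans_eq ?_)
  rw [add_assoc, ← EReal.coe_add, neg_add_cancel, EReal.coe_zero, add_zero]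

end ConvexProx

/-- If the norms `‖prox_f · - x₀‖` and `‖prox_g · - x₀‖` coincide everywhere, then
`f - f x₀ = g - g x₀`. -/
theorem eq_of_prox_norm_eq
    (f g : H → EReal) (hf : Gamma0 f) (hg : Gamma0 g)
    (x₀ : H) (hx₀f : f x₀ ≠ ⊤) (hx₀g : g x₀ ≠ ⊤)
    (proxf proxg : H → H)
    (hproxf : ∀ x, IsProx f x (proxf x)) (hproxg : ∀ x, IsProx g x (proxg x))
    (h : ∀ x, ‖proxf x - x₀‖ = ‖proxg x - x₀‖) :
    ∀ x, f x - f x₀ = g x - g x₀ := by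
  have hΦ := isSubgradientField_proxPotential hf.1 hf.2.1 hproxf x₀
  have hΨ := isSubgradientField_proxPotential hg.1 hg.2.1 hproxg x₀
  have hu : LipschitzWith 1 fun x => proxf x - x₀ := by
    simpa using (lipschitzWith_one_of_isProx hf.1 hf.2.1 hf.2.2.1 hproxf).sub
      (LipschitzWith.const x₀)
  have hv : LipschitzWith 1 fun x => proxg x - x₀ := by
    simpa using (lipschitzWith_one_of_isProx hg.1 hg.2.1 hg.2.2.1 hproxg).sub
      (LipschitzWith.const x₀)
  have hc := hΦ.sub_eq_sub_of_norm_eq hΨ hu hv h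
    ⟨_, Set.forall_mem_range.2 (neg_toReal_le_proxPotential hf.1 hf.2.1 hproxf hx₀f)⟩
    ⟨_, Set.forall_mem_range.2 (neg_toReal_le_proxPotential hg.1 hg.2.1 hproxg hx₀g)⟩
  obtain rfl : proxf = proxg := funext fun x => by
    simpa using congrFun (hΦ.eq_of_sub_eq_sub hΨ hv hc) x
  obtain ⟨κ, hκ⟩ :=
    exists_eq_add_of_proxPotential_sub_eq hf.1 hf.2.1 hg.1 hg.2.1 hproxf hproxg hc
  intro x
  rw [eq_add_of_forall_eq_add_prox hf hg hproxf hproxg hκ x,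
    eq_add_of_forall_eq_add_prox hf hg hproxf hproxg hκ x₀, EReal.add_coe_sub_add_coe]
end
end

section
/- Let H be a real Hilbert space and let f, g ∈ Γ0(H). If for every x ∈ H the subdifferentials ∂f(x) and ∂g(x) have the same element of minimal norm whenever they are nonempty (i.e., the projection of 0 onto ∂f(x) equals the projection of 0 onto ∂g(x) for all x ∈ H), then ∂f(x) = ∂g(x) for all x ∈ H. -/
/-!
Let `S x` be the common element of minimal norm of `∂f(x)` and `∂g(x)`, and `φ = f - g`. Adding
the subgradient inequalities of `f` and `g` at `a, b ∈ dom ∂f` gives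
`|φ a - φ b| ≤ ⟪S a - S b, a - b⟫`. Replacing `[a, b]` by `[a, m] ∪ [m, b]`, with `m ∈ dom ∂f`
near the midpoint `c`, halves the right-hand side up to `⟪2 S m - S a - S b, m - c⟫`, which is
small because `‖S m‖ ‖m - c‖ ≤ ‖q‖ ‖m - c‖` for any `q ∈ ∂f(m)`. Iterating, `φ` is constant on
`dom ∂f`.

Points `m` with a subgradient `q` making `‖m - c‖` and `‖q‖ ‖m - c‖` small come from projecting
`(c, f c - η)` onto the epigraph of `f` in `H × ℝ`. They also approximate `dom g` by
`dom ∂g = dom ∂f` without increasing `g`, which turns the subgradient inequality of `f` into that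
of `g`.
-/

open Filter Set Topology

open scoped InnerProductSpace
noncomputable section

variable {H : Type*} [NormedAddCommGroup H] [InnerProductSpace ℝ H] [CompleteSpace H]

/-- The (convex) subdifferential of `f` at `x`. -/
def subdiff (f : H → EReal) (x : H) : Set H :=
  {p | ∀ y : H, f x + ((⟪p, y - x⟫_ℝ : ℝ) : EReal) ≤ f y}

/-- The set of elements of minimal norm of `∂f(x)`; it is the singleton consisting of the
projection of `0` onto `∂f(x)` when the latter is nonempty, and empty otherwise. -/
def minNormSection (f : H → EReal) (x : H) : Set H :=
  {p | p ∈ subdiff f x ∧ ∀ u ∈ subdiff f x, ‖p‖ ≤ ‖u‖}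

variable {f g : H → EReal}

section

omit [CompleteSpace H]

variable {x p : H}

lemma continuous_const_add_coe (c : EReal) : Continuous fun r : ℝ => c + (r : EReal) :=
  continuous_iff_continuousAt.2 fun r =>
    (EReal.continuousAt_add (Or.inr (EReal.coe_ne_bot r)) (Or.inr (EReal.coe_ne_top r))).comp
      (continuous_const.prodMk continuous_coe_real_ereal).continuousAt

lemma subdiff_eq_iInter_preimage (f : H → EReal) (x : H) :
    subdiff f x = ⋂ y, innerSL ℝ (y - x) ⁻¹' {r : ℝ | f x + r ≤ f y} := by
  ext p
  simp only [subdiff, mem_iInter, mem_preimage, mem_ofPred_eq, innerSL_apply_apply,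
    real_inner_comm]

lemma isClosed_subdiff (f : H → EReal) (x : H) : IsClosed (subdiff f x) := by
  rw [subdiff_eq_iInter_preimage]
  exact isClosed_iInter fun y =>
    (isClosed_le (continuous_const_add_coe _) continuous_const).preimage (innerSL ℝ _).continuous

lemma convex_subdiff (f : H → EReal) (x : H) : Convex ℝ (subdiff f x) := by
  rw [subdiff_eq_iInter_preimage]
  refine convex_iInter fun y => Convex.linear_preimage ?_ (innerSL ℝ (y - x)).toLinearMap
  refine IsLowerSet.ordConnected (fun (r s : ℝ) hsr (hr : f x + r ≤ f y) => ?_) |>.convex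
  exact le_trans (by gcongr) hr

lemma ne_top_of_mem_subdiff (hf : ∃ y, f y ≠ ⊤) (hp : p ∈ subdiff f x) : f x ≠ ⊤ := by
  obtain ⟨y, hy⟩ := hf
  intro hx
  have := hp y
  rw [hx, EReal.top_add_of_ne_bot (EReal.coe_ne_bot _), top_le_iff] at this
  exact hy this

lemma toReal_add_inner_le_of_mem_subdiff (hbot : ∀ y, f y ≠ ⊥) (hp : p ∈ subdiff f x) {y : H}
    (hy : f y ≠ ⊤) : (f x).toReal + ⟪p, y - x⟫_ℝ ≤ (f y).toReal := by
  have hx : f x ≠ ⊤ := ne_top_of_mem_subdiff ⟨y, hy⟩ hp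
  have := hp y
  rw [← EReal.coe_toReal hx (hbot x), ← EReal.coe_toReal hy (hbot y), ← EReal.coe_add] at this
  exact_mod_cast this

lemma mem_subdiff_of_toReal_add_inner_le (hbot : ∀ y, f y ≠ ⊥) (hx : f x ≠ ⊤)
    (h : ∀ y, f y ≠ ⊤ → (f x).toReal + ⟪p, y - x⟫_ℝ ≤ (f y).toReal) : p ∈ subdiff f x := by
  intro y
  by_cases hy : f y = ⊤
  · simp [hy]
  · rw [← EReal.coe_toReal hx (hbot x), ← EReal.coe_toReal hy (hbot y), ← EReal.coe_add]
    exact_mod_cast h y hy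

lemma ERealConvexOn.map_add_ne_top (hf : ERealConvexOn f) {y : H} {a b : ℝ} (ha : 0 ≤ a)
    (hb : 0 ≤ b) (hab : a + b = 1) (hx : f x ≠ ⊤) (hy : f y ≠ ⊤) : f (a • x + b • y) ≠ ⊤ :=
  have coe_mul_ne_top {c : ℝ} (hc : 0 ≤ c) {z : EReal} (hz : z ≠ ⊤) : (c : EReal) * z ≠ ⊤ :=
    (EReal.mul_ne_top _ _).2
      ⟨.inl (EReal.coe_ne_bot c), .inl (by exact_mod_cast hc), .inl (EReal.coe_ne_top c), .inr hz⟩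
  ne_top_of_le_ne_top (EReal.add_ne_top (coe_mul_ne_top ha hx) (coe_mul_ne_top hb hy))
    (hf x y a b ha hb hab)

-- `WithLp 2` gives `H × ℝ` its Hilbert-space structure, so that epigraphs can be projected onto.
def epigraph (f : H → EReal) : Set (WithLp 2 (H × ℝ)) := {z | f z.fst ≤ z.snd}

lemma ERealConvexOn.convex_epigraph (hf : ERealConvexOn f) : Convex ℝ (epigraph f) := by
  intro z hz w hw a b ha hb hab
  calc f (a • z.fst + b • w.fst) ≤ (a : EReal) * f z.fst + (b : EReal) * f w.fst :=
        hf _ _ a b ha hb hab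
    _ ≤ (a : EReal) * z.snd + (b : EReal) * w.snd := by
        gcongr <;> first | exact_mod_cast ha | exact_mod_cast hb | assumption
    _ = ((a • z + b • w).snd : ℝ) := by
        simp only [WithLp.add_snd, WithLp.smul_snd, smul_eq_mul, EReal.coe_add, EReal.coe_mul]

omit [InnerProductSpace ℝ H] in
lemma LowerSemicontinuous.isClosed_epigraph_withLp (hf : LowerSemicontinuous f) :
    IsClosed (epigraph f) :=
  hf.isClosed_epigraph.preimage <| (WithLp.continuous_fst 2 H ℝ).prodMk <|
    continuous_coe_real_ereal.comp (WithLp.continuous_snd 2 H ℝ)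

lemma abs_sub_sub_le_inner_of_mem_subdiff (hf : Gamma0 f) (hg : Gamma0 g) {a b u v : H}
    (hu : u ∈ subdiff f a ∩ subdiff g a) (hv : v ∈ subdiff f b ∩ subdiff g b) :
    |((f a).toReal - (g a).toReal) - ((f b).toReal - (g b).toReal)| ≤ ⟪u - v, a - b⟫_ℝ := by
  have hfa := toReal_add_inner_le_of_mem_subdiff hf.2.1 hv.1 (ne_top_of_mem_subdiff hf.1 hu.1)
  have hfb := toReal_add_inner_le_of_mem_subdiff hf.2.1 hu.1 (ne_top_of_mem_subdiff hf.1 hv.1)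
  have hga := toReal_add_inner_le_of_mem_subdiff hg.2.1 hv.2 (ne_top_of_mem_subdiff hg.1 hu.2)
  have hgb := toReal_add_inner_le_of_mem_subdiff hg.2.1 hu.2 (ne_top_of_mem_subdiff hg.1 hv.2)
  have hba : ⟪u, b - a⟫_ℝ = -⟪u, a - b⟫_ℝ := by rw [← inner_neg_right, neg_sub]
  rw [inner_sub_left, abs_le]
  constructor <;> linarith

lemma inner_sub_sub_add_inner_sub_sub (u v w a b m : H) :
    ⟪u - w, a - m⟫_ℝ + ⟪w - v, m - b⟫_ℝ =
      ⟪u - v, a - b⟫_ℝ / 2 + ⟪(2 : ℝ) • w - u - v, m - ((1 / 2 : ℝ) • a + (1 / 2 : ℝ) • b)⟫_ℝ := by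
  have ha : a - m = (1 / 2 : ℝ) • (a - b) - (m - ((1 / 2 : ℝ) • a + (1 / 2 : ℝ) • b)) := by module
  have hb : m - b = (1 / 2 : ℝ) • (a - b) + (m - ((1 / 2 : ℝ) • a + (1 / 2 : ℝ) • b)) := by module
  rw [ha, hb]
  simp only [inner_sub_left, inner_sub_right, inner_add_right, real_inner_smul_right,
    real_inner_smul_left]
  ring

lemma norm_two_smul_sub_sub_le (u v w : H) : ‖(2 : ℝ) • w - u - v‖ ≤ 2 * ‖w‖ + ‖u‖ + ‖v‖ :=
  calc ‖(2 : ℝ) • w - u - v‖ ≤ ‖(2 : ℝ) • w‖ + ‖u‖ + ‖v‖ :=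
        (norm_sub_le _ _).trans (by gcongr; exact norm_sub_le _ _)
    _ = 2 * ‖w‖ + ‖u‖ + ‖v‖ := by rw [norm_smul, Real.norm_two]

end

theorem exists_mem_forall_inner_sub_sub_nonpos {F : Type*} [NormedAddCommGroup F]
    [InnerProductSpace ℝ F] [CompleteSpace F] {K : Set F} (hne : K.Nonempty) (hcl : IsClosed K)
    (hK : Convex ℝ K) (u : F) : ∃ v ∈ K, ∀ w ∈ K, ⟪u - v, w - v⟫_ℝ ≤ 0 := by
  obtain ⟨v, hv, hmin⟩ := exists_norm_eq_iInf_of_complete_convex hne hcl.isComplete hK u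
  exact ⟨v, hv, (norm_eq_iInf_iff_real_inner_le_zero hK hv).1 hmin⟩

lemma minNormSection_nonempty {x : H} (hx : (subdiff f x).Nonempty) :
    (minNormSection f x).Nonempty := by
  obtain ⟨v, hv, hmin⟩ := exists_norm_eq_iInf_of_complete_convex hx
    (isClosed_subdiff f x).isComplete (convex_subdiff f x) (0 : H)
  have : Nonempty (subdiff f x) := hx.to_subtype
  refine ⟨v, hv, fun u hu => ?_⟩
  rw [show ‖v‖ = ⨅ w : subdiff f x, ‖(w : H)‖ by simpa using hmin]
  exact ciInf_le ⟨0, forall_mem_range.2 fun _ => norm_nonneg _⟩ (⟨u, hu⟩ : subdiff f x)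

-- `(m, s)` is the projection of `(c, t)` onto the epigraph of `f`.
theorem exists_inv_smul_sub_mem_subdiff (hf : Gamma0 f) {c : H} {t : ℝ} (hc : f c ≠ ⊤)
    (ht : t < (f c).toReal) :
    ∃ m : H, ∃ s : ℝ, f m ≤ s ∧ t < s ∧ (s - t)⁻¹ • (c - m) ∈ subdiff f m ∧
      ‖c - m‖ ^ 2 ≤ (s - t) * ((f c).toReal - s) := by
  have hfc : f c = (f c).toReal := (EReal.coe_toReal hc (hf.2.1 c)).symm
  obtain ⟨P, hP, hproj⟩ := exists_mem_forall_inner_sub_sub_nonpos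
    ⟨WithLp.toLp 2 (c, (f c).toReal), hfc.le⟩ hf.2.2.2.isClosed_epigraph_withLp
    hf.2.2.1.convex_epigraph (WithLp.toLp 2 (c, t))
  set m := P.fst
  set s := P.snd
  have key : ∀ y (r : ℝ), f y ≤ r → ⟪c - m, y - m⟫_ℝ + (t - s) * (r - s) ≤ 0 := fun y r hy => by
    simpa [mul_comm] using hproj (WithLp.toLp 2 (y, r)) hy
  have hts : t ≤ s := by
    have := key m (s + 1) (hP.trans (by exact_mod_cast (lt_add_one s).le))
    simp only [sub_self, inner_zero_right, zero_add, add_sub_cancel_left, mul_one] at this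
    linarith
  have hcm : ‖c - m‖ ^ 2 ≤ (s - t) * ((f c).toReal - s) := by
    have := key c _ hfc.le
    rw [real_inner_self_eq_norm_sq] at this
    linarith
  have hst : t < s := by
    refine hts.lt_of_ne fun hts => ?_
    have hcm_eq : c = m := by
      rw [← sub_eq_zero, ← norm_eq_zero]
      nlinarith [norm_nonneg (c - m)]
    have : f c ≤ t := hts ▸ hcm_eq ▸ hP
    rw [hfc] at this
    exact (EReal.coe_le_coe_iff.1 this).not_gt ht
  refine ⟨m, s, hP, hst, ?_, hcm⟩
  have hm : f m ≠ ⊤ := ne_top_of_le_ne_top (EReal.coe_ne_top s) hP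
  have hms : (f m).toReal ≤ s := EReal.toReal_le_toReal hP (hf.2.1 m) (EReal.coe_ne_top s)
  refine mem_subdiff_of_toReal_add_inner_le hf.2.1 hm fun y hy => ?_
  have := key y _ (EReal.coe_toReal hy (hf.2.1 y)).ge
  rw [real_inner_smul_left]
  have : (s - t)⁻¹ * ⟪c - m, y - m⟫_ℝ ≤ (f y).toReal - s := by
    rw [inv_mul_le_iff₀ (sub_pos.2 hst)]
    linarith
  linarith

theorem exists_mem_subdiff_near (hf : Gamma0 f) {c : H} (hc : f c ≠ ⊤) {δ : ℝ} (hδ : 0 < δ) :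
    ∃ m q, q ∈ subdiff f m ∧ ‖m - c‖ ≤ δ ∧ ‖q‖ * ‖m - c‖ ≤ δ ∧ f m ≤ f c := by
  have hfc : f c = (f c).toReal := (EReal.coe_toReal hc (hf.2.1 c)).symm
  obtain ⟨ρ, hρ, hlsc⟩ : ∃ ρ > 0, ∀ w, dist w c < ρ → (((f c).toReal - δ : ℝ) : EReal) < f w :=
    Metric.eventually_nhds_iff.1 <| hf.2.2.2 c _ <|
      (EReal.coe_lt_coe_iff.2 (by linarith : (f c).toReal - δ < (f c).toReal)).trans_eq hfc.symm
  set η := min δ ρ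
  have hη : 0 < η := lt_min hδ hρ
  obtain ⟨m, s, hms, hts, hq, hcm⟩ :=
    exists_inv_smul_sub_mem_subdiff hf hc (t := (f c).toReal - η) (by linarith)
  -- `(s - t) + ((f c).toReal - s) = η`, so by AM-GM the bound in `hcm` is at most `(η / 2) ^ 2`
  have hsc : s ≤ (f c).toReal := by nlinarith [norm_nonneg (c - m)]
  have hmc : ‖m - c‖ ≤ η / 2 := by
    rw [norm_sub_rev, ← sq_le_sq₀ (norm_nonneg _) (by linarith)]
    nlinarith [sq_nonneg (s - ((f c).toReal - η) - ((f c).toReal - s))]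
  have hfm : (f c).toReal - δ < s := by
    have := (hlsc m (by rw [dist_eq_norm]; linarith [min_le_right δ ρ])).trans_le hms
    exact_mod_cast this
  refine ⟨m, _, hq, by linarith [min_le_left δ ρ], ?_, hms.trans (hfc ▸ by exact_mod_cast hsc)⟩
  have hst : 0 < s - ((f c).toReal - η) := by linarith
  calc ‖(s - ((f c).toReal - η))⁻¹ • (c - m)‖ * ‖m - c‖
      = ‖c - m‖ ^ 2 / (s - ((f c).toReal - η)) := by
        rw [norm_smul, norm_inv, Real.norm_of_nonneg hst.le, norm_sub_rev m c]
        ring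
    _ ≤ (f c).toReal - s := by rwa [div_le_iff₀' hst]
    _ ≤ δ := by linarith

theorem eq_of_abs_sub_le_of_halving {α : Type*} {D : Set α} {φ : α → ℝ} {B : α → α → ℝ}
    (hφ : ∀ a ∈ D, ∀ b ∈ D, |φ a - φ b| ≤ B a b)
    (hB : ∀ a ∈ D, ∀ b ∈ D, ∀ ε > 0, ∃ m ∈ D, B a m + B m b ≤ B a b / 2 + ε)
    {a b : α} (ha : a ∈ D) (hb : b ∈ D) : φ a = φ b := by
  have key (n : ℕ) : ∀ a ∈ D, ∀ b ∈ D, ∀ ε > 0, |φ a - φ b| ≤ B a b / 2 ^ n + ε := by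
    induction n with
    | zero =>
      intro a ha b hb ε hε
      simpa using (hφ a ha b hb).trans (le_add_of_nonneg_right hε.le)
    | succ n ih =>
      intro a ha b hb ε hε
      obtain ⟨m, hm, hBm⟩ := hB a ha b hb (2 ^ n * ε / 2) (by positivity)
      calc |φ a - φ b| ≤ |φ a - φ m| + |φ m - φ b| := abs_sub_le _ _ _
        _ ≤ (B a m / 2 ^ n + ε / 4) + (B m b / 2 ^ n + ε / 4) :=
          add_le_add (ih a ha m hm _ (by positivity)) (ih m hm b hb _ (by positivity))
        _ = (B a m + B m b) / 2 ^ n + ε / 2 := by ring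
        _ ≤ (B a b / 2 + 2 ^ n * ε / 2) / 2 ^ n + ε / 2 := by gcongr
        _ = B a b / 2 ^ (n + 1) + ε := by field_simp; ring
  have hlim : Tendsto (fun n : ℕ => B a b / 2 ^ n) atTop (𝓝 0) := by
    simpa [div_eq_mul_inv] using
      tendsto_pow_atTop_nhds_zero_of_lt_one (by norm_num) (by norm_num : (1 / 2 : ℝ) < 1)
        |>.const_mul (B a b)
  refine sub_eq_zero.1 <| abs_nonpos_iff.1 <| le_of_forall_pos_le_add fun ε hε => ?_
  exact ge_of_tendsto' (by simpa using hlim.add_const ε) fun n => key n a ha b hb ε hε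

def domSubdiff (f : H → EReal) : Set H := {x | (subdiff f x).Nonempty}

lemma mem_domSubdiff_iff_minNormSection_nonempty {x : H} :
    x ∈ domSubdiff f ↔ (minNormSection f x).Nonempty :=
  ⟨minNormSection_nonempty, fun ⟨p, hp⟩ => ⟨p, hp.1⟩⟩

lemma domSubdiff_eq_of_minNormSection_eq (h : ∀ x, minNormSection f x = minNormSection g x) :
    domSubdiff f = domSubdiff g := by
  ext x
  simp only [mem_domSubdiff_iff_minNormSection_nonempty, h x]

lemma exists_mem_domSubdiff_inner_le_half_add (hf : Gamma0 f) {S : H → H}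
    (hS : ∀ x ∈ domSubdiff f, S x ∈ minNormSection f x) {a b : H} (ha : a ∈ domSubdiff f)
    (hb : b ∈ domSubdiff f) {ε : ℝ} (hε : 0 < ε) :
    ∃ m ∈ domSubdiff f, ⟪S a - S m, a - m⟫_ℝ + ⟪S m - S b, m - b⟫_ℝ ≤
      ⟪S a - S b, a - b⟫_ℝ / 2 + ε := by
  have hc : f ((1 / 2 : ℝ) • a + (1 / 2 : ℝ) • b) ≠ ⊤ :=
    hf.2.2.1.map_add_ne_top (by norm_num) (by norm_num) (by norm_num)
      (ne_top_of_mem_subdiff hf.1 ha.some_mem) (ne_top_of_mem_subdiff hf.1 hb.some_mem)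
  set C := 2 + ‖S a‖ + ‖S b‖
  obtain ⟨m, q, hq, hmc, hqmc, -⟩ := exists_mem_subdiff_near hf hc (δ := ε / C) (by positivity)
  have hm : m ∈ domSubdiff f := ⟨q, hq⟩
  have hSm : ‖S m‖ ≤ ‖q‖ := (hS m hm).2 q hq
  refine ⟨m, hm, ?_⟩
  rw [inner_sub_sub_add_inner_sub_sub]
  gcongr
  calc _ ≤ ‖(2 : ℝ) • S m - S a - S b‖ * ‖m - ((1 / 2 : ℝ) • a + (1 / 2 : ℝ) • b)‖ :=
        real_inner_le_norm _ _
    _ ≤ (2 * ‖q‖ + ‖S a‖ + ‖S b‖) * ‖m - ((1 / 2 : ℝ) • a + (1 / 2 : ℝ) • b)‖ := by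
        gcongr
        exact (norm_two_smul_sub_sub_le _ _ _).trans (by gcongr)
    _ = 2 * (‖q‖ * ‖m - ((1 / 2 : ℝ) • a + (1 / 2 : ℝ) • b)‖) +
          (‖S a‖ + ‖S b‖) * ‖m - ((1 / 2 : ℝ) • a + (1 / 2 : ℝ) • b)‖ := by ring
    _ ≤ 2 * (ε / C) + (‖S a‖ + ‖S b‖) * (ε / C) := by gcongr
    _ = C * (ε / C) := by ring
    _ = ε := mul_div_cancel₀ _ (by positivity)

theorem toReal_sub_toReal_eq_of_minNormSection_eq (hf : Gamma0 f) (hg : Gamma0 g)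
    (h : ∀ x, minNormSection f x = minNormSection g x) {a b : H} (ha : a ∈ domSubdiff f)
    (hb : b ∈ domSubdiff f) : (f a).toReal - (g a).toReal = (f b).toReal - (g b).toReal := by
  choose! S hS using fun x (hx : x ∈ domSubdiff f) => minNormSection_nonempty hx
  have hSg (x : H) (hx : x ∈ domSubdiff f) : S x ∈ subdiff g x := (h x ▸ hS x hx).1
  refine eq_of_abs_sub_le_of_halving (φ := fun x => (f x).toReal - (g x).toReal)
    (B := fun a b => ⟪S a - S b, a - b⟫_ℝ)
    (fun a ha b hb => ?_)
    (fun a ha b hb ε hε => exists_mem_domSubdiff_inner_le_half_add hf hS ha hb hε) ha hb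
  exact abs_sub_sub_le_inner_of_mem_subdiff hf hg ⟨(hS a ha).1, hSg a ha⟩ ⟨(hS b hb).1, hSg b hb⟩

theorem subdiff_subset_of_minNormSection_eq (hf : Gamma0 f) (hg : Gamma0 g)
    (h : ∀ x, minNormSection f x = minNormSection g x) (x : H) : subdiff f x ⊆ subdiff g x := by
  intro p hp
  have hx : x ∈ domSubdiff f := ⟨p, hp⟩
  have hdom := domSubdiff_eq_of_minNormSection_eq h
  obtain ⟨u, hu⟩ : x ∈ domSubdiff g := hdom ▸ hx
  refine mem_subdiff_of_toReal_add_inner_le hg.2.1 (ne_top_of_mem_subdiff hg.1 hu) fun y hy => ?_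
  refine le_of_forall_pos_le_add fun ε hε => ?_
  obtain ⟨m, q, hq, hmy, -, hgm⟩ :=
    exists_mem_subdiff_near hg hy (δ := ε / (‖p‖ + 1)) (by positivity)
  have hm : m ∈ domSubdiff f := hdom ▸ ⟨q, hq⟩
  have hfm := toReal_add_inner_le_of_mem_subdiff hf.2.1 hp (ne_top_of_mem_subdiff hf.1 hm.some_mem)
  have hfg := toReal_sub_toReal_eq_of_minNormSection_eq hf hg h hm hx
  have hgm' : (g m).toReal ≤ (g y).toReal := EReal.toReal_le_toReal hgm (hg.2.1 m) hy
  have hpy : ⟪p, y - m⟫_ℝ ≤ ε :=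
    calc ⟪p, y - m⟫_ℝ ≤ ‖p‖ * ‖y - m‖ := real_inner_le_norm _ _
      _ ≤ (‖p‖ + 1) * (ε / (‖p‖ + 1)) := by rw [norm_sub_rev]; gcongr; linarith
      _ = ε := mul_div_cancel₀ _ (by positivity)
  have hsplit : ⟪p, y - x⟫_ℝ = ⟪p, m - x⟫_ℝ + ⟪p, y - m⟫_ℝ := by
    rw [← inner_add_right, sub_add_sub_cancel']
  linarith

/-- If the subdifferentials of `f` and `g` have the same element of minimal norm
(the projection of `0`) at every point, then the subdifferentials coincide. -/
theorem subdiff_eq_of_minNormSection_eq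
    (f g : H → EReal) (hf : Gamma0 f) (hg : Gamma0 g)
    (h : ∀ x : H, minNormSection f x = minNormSection g x) :
    ∀ x : H, subdiff f x = subdiff g x := by
  intro x
  exact (subdiff_subset_of_minNormSection_eq hf hg h x).antisymm
    (subdiff_subset_of_minNormSection_eq hg hf (fun y => (h y).symm) x)
end
end

section
/- Let H be a real Hilbert space of dimension at least 1. Then there exist functions f, g ∈ Γ0(H) such that ‖prox_f(x)‖ = ‖prox_g(x)‖ for all x ∈ H, yet f − g is not constant on dom f ∪ dom g. Concretely, if x₁ ≠ x₂ with ‖x₁‖ = ‖x₂‖, the indicator functions f = δ_{{x₁}} and g = δ_{{x₂}} satisfy ‖prox_f(x)‖ = ‖x₁‖ = ‖x₂‖ = ‖prox_g(x)‖ for all x ∈ H while f ≠ g + c for any constant c. -/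
open scoped InnerProductSpace
noncomputable section

variable {H : Type*} [NormedAddCommGroup H] [InnerProductSpace ℝ H] [CompleteSpace H]

open scoped Classical in
lemma ind_gamma0 (v : H) : Gamma0 (fun x => if x = v then (0:EReal) else ⊤) := by
  refine ⟨⟨v, by simp⟩, fun x => by dsimp only; split <;> simp, ?_, ?_⟩
  · intro x y a b ha hb hab
    rcases eq_or_lt_of_le ha with ha0 | ha0
    · have hb1 : b = 1 := by linarith
      subst hb1
      simp [← ha0]
    rcases eq_or_lt_of_le hb with hb0 | hb0
    · have ha1 : a = 1 := by linarith
      subst ha1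
      simp [← hb0]
    by_cases hx : x = v
    · by_cases hy : y = v
      · have hveq : a • x + b • y = v := by
          rw [hx, hy, ← add_smul, hab, one_smul]
        simp only [if_pos hveq, if_pos hx, if_pos hy]
        simp
      · have h1 : ((b:EReal)) * ⊤ = ⊤ := EReal.mul_top_of_pos (by exact_mod_cast hb0)
        have h2 : ((a:EReal)) * (if x = v then (0:EReal) else ⊤) ≠ ⊥ := by
          split <;> simp [EReal.mul_top_of_pos, ha0]
        simp only [if_neg hy, h1]
        rw [EReal.add_top_of_ne_bot h2]
        exact le_top
    · have h1 : ((a:EReal)) * ⊤ = ⊤ := EReal.mul_top_of_pos (by exact_mod_cast ha0)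
      have h2 : ((b:EReal)) * (if y = v then (0:EReal) else ⊤) ≠ ⊥ := by
        split <;> simp [EReal.mul_top_of_pos, hb0]
      simp only [if_neg hx, h1]
      rw [EReal.top_add_of_ne_bot h2]
      exact le_top
  · intro x
    by_cases hx : x = v
    · subst hx
      intro y hy
      simp only [if_pos rfl] at hy
      filter_upwards with z
      split
      · exact hy
      · exact hy.trans_le le_top
    · intro y hy
      have hev : ∀ᶠ z in nhds x, z ≠ v :=
        IsOpen.eventually_mem isOpen_compl_singleton hx
      filter_upwards [hev] with z hz
      simp only [if_neg hz]
      simp only [if_neg hx] at hy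
      exact hy

open scoped Classical in
lemma ind_prox (v : H) (x : H) :
    IsProx (fun z => if z = v then (0:EReal) else ⊤) x v := by
  intro y
  by_cases hy : y = v
  · subst hy; exact le_refl _
  · simp only [if_neg hy, if_pos rfl]
    rw [EReal.top_add_of_ne_bot (EReal.coe_ne_bot _)]
    exact le_top

/-- In any nontrivial real Hilbert space there are `f, g ∈ Γ₀(H)` whose proximal operators have
equal norms everywhere, yet `f` and `g` do not differ by a constant: hence the boundedness from
below of the conjugates cannot be dropped in the determination theorem. -/
theorem exists_prox_norm_eq_not_diff_const [Nontrivial H] :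
    ∃ (f g : H → EReal) (proxf proxg : H → H),
      Gamma0 f ∧ Gamma0 g ∧
      (∀ x, IsProx f x (proxf x)) ∧ (∀ x, IsProx g x (proxg x)) ∧
      (∀ x, ‖proxf x‖ = ‖proxg x‖) ∧
      ¬∃ c : ℝ, ∀ x, f x = g x + (c : EReal) := by
  obtain ⟨v, hv⟩ := exists_ne (0 : H)
  have hvne : v ≠ -v := by
    intro h
    apply hv
    have h2 : (2:ℝ) • v = 0 := by rw [two_smul]; nth_rewrite 2 [h]; simp
    rcases smul_eq_zero.mp h2 with h | h
    · norm_num at h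
    · exact h
  refine ⟨open scoped Classical in fun z => if z = v then (0:EReal) else ⊤,
          open scoped Classical in fun z => if z = -v then (0:EReal) else ⊤,
          fun _ => v, fun _ => -v,
          ind_gamma0 v, ind_gamma0 (-v), fun x => ind_prox v x, fun x => ind_prox (-v) x,
          fun x => (norm_neg v).symm, ?_⟩
  rintro ⟨c, hc⟩
  have := hc v
  simp only [if_pos rfl, if_neg hvne] at this
  rw [EReal.top_add_of_ne_bot (by simp)] at this
  exact EReal.zero_ne_top this
end
end
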